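/- arXiv:math/0505692 — 11 statements merged into one kernel-verified Lean document; each statement's English description precedes it below -/
import Mathlib

section
/- The rearrangement relation is symmetric: if the law ν of an n-tuple of real random variables is a rearrangement of the law λ (i.e., there is a probability space carrying X = (X_1,...,X_n) with law λ and a random permutation σ with values in S_n such that X^σ = (X_{σ(1)},...,X_{σ(n)}) has law ν), then λ is a rearrangement of ν: there is a probability space carrying Y with law ν and a random permutation ρ with values in S_n such that Y^ρ has law λ. -/
open MeasureTheory

/-- A law `ν` on `ℝ^n` is a *rearrangement* of a law `lam` on `ℝ^n` if there is a
probability space carrying a random vector `X` with law `lam` and a random permutation `σ`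
with values in `S_n` (with measurable fibers) such that `X^σ = (X_{σ 1},...,X_{σ n})`
has law `ν`. -/
def IsRearrangement (n : ℕ) (lam nu : Measure (Fin n → ℝ)) : Prop :=
  ∃ (Ω : Type) (_ : MeasurableSpace Ω) (P : Measure Ω),
    IsProbabilityMeasure P ∧
    ∃ (X : Ω → Fin n → ℝ) (σ : Ω → Equiv.Perm (Fin n)),
      Measurable X ∧ (∀ s : Equiv.Perm (Fin n), MeasurableSet {ω | σ ω = s}) ∧
      P.map X = lam ∧ P.map (fun ω i => X ω (σ ω i)) = nu

/-- The rearrangement relation is symmetric: if `ν` is a rearrangement of `lam`, then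
`lam` is a rearrangement of `ν`. -/
theorem isRearrangement_symm (n : ℕ) (lam nu : Measure (Fin n → ℝ))
    (hlam : IsProbabilityMeasure lam) (hnu : IsProbabilityMeasure nu)
    (h : IsRearrangement n lam nu) : IsRearrangement n nu lam := by
  obtain ⟨Ω, mΩ, P, hP, X, σ, hX, hσ, hmapX, hmapY⟩ := h
  refine ⟨Ω, mΩ, P, hP, fun ω i => X ω (σ ω i), fun ω => (σ ω)⁻¹, ?_, ?_, hmapY, ?_⟩
  · -- measurability of Y
    have hY : ∀ i : Fin n, Measurable (fun ω => X ω (σ ω i)) := by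
      intro i
      have : (fun ω => X ω (σ ω i)) =
          fun ω => ∑ s : Equiv.Perm (Fin n),
            Set.indicator {ω | σ ω = s} (fun ω => X ω (s i)) ω := by
        funext ω
        rw [Finset.sum_eq_single (σ ω)]
        · simp [Set.indicator]
        · intro s _ hs
          simp [Set.indicator, Set.mem_setOf_eq, fun h : σ ω = s => hs h.symm]
          intro h; exact absurd h.symm hs
        · simp
      rw [this]
      exact Finset.measurable_sum _ fun s _ =>
        ((hX.eval (a := s i)).indicator (hσ s))
    exact measurable_pi_lambda _ hY
  · -- measurable fibers of ρ
    intro s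
    have : {ω | (σ ω)⁻¹ = s} = {ω | σ ω = s⁻¹} := by
      ext ω; simp [inv_eq_iff_eq_inv]
    rw [this]; exact hσ s⁻¹
  · -- Y^ρ = X
    have : (fun ω i => X ω (σ ω ((σ ω)⁻¹ i))) = X := by
      funext ω i
      simp
    rw [this, hmapX]
end

section
/- The rearrangement relation is transitive: if the law ν on ℝ^n is a rearrangement of the law λ, and the law κ on ℝ^n is a rearrangement of ν, then κ is a rearrangement of λ. -/
open MeasureTheory

/-- We endow permutation groups with the discrete (⊤) σ-algebra. -/
instance permMS (n : ℕ) : MeasurableSpace (Equiv.Perm (Fin n)) := ⊤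

instance permMSC (n : ℕ) : MeasurableSingletonClass (Equiv.Perm (Fin n)) :=
  ⟨fun _ => trivial⟩

lemma measurable_permuted {n : ℕ} {Ω : Type} [MeasurableSpace Ω]
    {X : Ω → Fin n → ℝ} {σ : Ω → Equiv.Perm (Fin n)}
    (hX : Measurable X) (hσ : ∀ s, MeasurableSet {ω | σ ω = s}) :
    Measurable (fun ω i => X ω (σ ω i)) := by
  have hσm : Measurable σ := measurable_to_countable' fun s => hσ s
  have h2 : Measurable (fun p : (Fin n → ℝ) × Equiv.Perm (Fin n) => fun i => p.1 (p.2 i)) :=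
    measurable_from_prod_countable_left fun s =>
      measurable_pi_lambda _ fun i => measurable_pi_apply (s i)
  exact h2.comp (hX.prodMk hσm)

/-- The rearrangement relation is transitive: if `ν` is a rearrangement of `lam` and `κ`
is a rearrangement of `ν`, then `κ` is a rearrangement of `lam`. -/
theorem isRearrangement_trans (n : ℕ) (lam nu kappa : Measure (Fin n → ℝ))
    (hlam : IsProbabilityMeasure lam) (hnu : IsProbabilityMeasure nu)
    (hkappa : IsProbabilityMeasure kappa)
    (h1 : IsRearrangement n lam nu) (h2 : IsRearrangement n nu kappa) :
    IsRearrangement n lam kappa := by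
  classical
  obtain ⟨Ω₁, m₁, P₁, hP₁, X, σ, hX, hσ, hX_law, hXσ_law⟩ := h1
  obtain ⟨Ω₂, m₂, P₂, hP₂, Y, τ, hY, hτ, hY_law, hYτ_law⟩ := h2
  -- the permutation action on ℝ^n
  set T : Equiv.Perm (Fin n) → (Fin n → ℝ) → (Fin n → ℝ) := fun s x i => x (s i) with hT
  have hTmeas : ∀ s : Equiv.Perm (Fin n), Measurable (T s) := fun s =>
    measurable_pi_lambda _ fun i => measurable_pi_apply (s i)
  set XS : Ω₁ → Fin n → ℝ := fun ω i => X ω (σ ω i) with hXS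
  have hXSm : Measurable XS := measurable_permuted hX hσ
  set YT : Ω₂ → Fin n → ℝ := fun ω i => Y ω (τ ω i) with hYT
  -- the fiber measures on ℝ^n
  set νp : Equiv.Perm (Fin n) → Measure (Fin n → ℝ) := fun s => (P₂.restrict {ω | τ ω = s}).map Y with hνp
  have hνple : ∀ s, νp s ≤ nu := by
    intro s
    rw [← hY_law]
    exact Measure.map_mono Measure.restrict_le_self hY
  have hνpac : ∀ s, νp s ≪ nu := fun s => Measure.absolutelyContinuous_of_le (hνple s)
  haveI : ∀ s, IsFiniteMeasure (νp s) := fun s => isFiniteMeasure_of_le nu (hνple s)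
  set f : Equiv.Perm (Fin n) → (Fin n → ℝ) → ENNReal := fun s => (νp s).rnDeriv nu with hf
  have hfm : ∀ s, Measurable (f s) := fun s => Measure.measurable_rnDeriv _ _
  have hwd : ∀ s, nu.withDensity (f s) = νp s := fun s =>
    Measure.withDensity_rnDeriv_eq _ _ (hνpac s)
  -- the fiber measures sum to nu
  have hνpB : ∀ (s : Equiv.Perm (Fin n)) (B : Set (Fin n → ℝ)), MeasurableSet B →
      νp s B = P₂ (Y ⁻¹' B ∩ {ω | τ ω = s}) := by
    intro s B hB
    rw [hνp, Measure.map_apply hY hB, Measure.restrict_apply (hY hB)]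
  have hsumν : ∑ s : Equiv.Perm (Fin n), νp s = nu := by
    ext B hB
    rw [Measure.finset_sum_apply]
    have : ∀ s ∈ Finset.univ, νp s B = P₂ (Y ⁻¹' B ∩ {ω | τ ω = s}) :=
      fun s _ => hνpB s B hB
    rw [Finset.sum_congr rfl this, ← hY_law, Measure.map_apply hY hB]
    have hcover : Y ⁻¹' B = ⋃ s : Equiv.Perm (Fin n), (Y ⁻¹' B ∩ {ω | τ ω = s}) := by
      ext ω; simp
    conv_rhs => rw [hcover]
    rw [measure_iUnion ?hd ?hm, tsum_fintype]
    case hd =>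
      intro s t hst
      simp only [Set.disjoint_left]
      rintro ω ⟨-, h1⟩ ⟨-, h2⟩
      exact hst (h1.symm.trans h2)
    case hm =>
      exact fun s => (hY hB).inter (hτ s)
  -- the densities sum to 1 a.e.
  set g : (Fin n → ℝ) → ENNReal := fun x => ∑ s : Equiv.Perm (Fin n), f s x with hg
  have hgm : Measurable g := Finset.measurable_sum _ fun s _ => hfm s
  have hgwd : nu.withDensity g = nu := by
    ext B hB
    rw [withDensity_apply _ hB]
    rw [lintegral_finset_sum _ (fun s _ => hfm s)]
    have : ∀ s ∈ Finset.univ, ∫⁻ x in B, f s x ∂nu = νp s B := by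
      intro s _
      rw [← withDensity_apply _ hB, hwd s]
    rw [Finset.sum_congr rfl this, ← Measure.finset_sum_apply, hsumν]
  have hg1 : g =ᵐ[nu] (1 : (Fin n → ℝ) → ENNReal) := by
    have h1 : (nu.withDensity g).rnDeriv nu =ᵐ[nu] g := Measure.rnDeriv_withDensity nu hgm
    rw [hgwd] at h1
    exact h1.symm.trans (Measure.rnDeriv_self nu)
  have hgXS1 : (fun ω => g (XS ω)) =ᵐ[P₁] (1 : Ω₁ → ENNReal) := by
    have : ∀ᵐ x ∂(P₁.map XS), g x = 1 := by rw [hXσ_law]; exact hg1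
    exact (MeasureTheory.ae_map_iff hXSm.aemeasurable (hgm (measurableSet_singleton 1))).mp this
  have hpair : ∀ s : Equiv.Perm (Fin n), Measurable (fun ω : Ω₁ => (ω, s)) :=
    fun s => measurable_id.prodMk measurable_const
  -- the coupling space
  refine ⟨Ω₁ × Equiv.Perm (Fin n), inferInstance,
    ∑ s : Equiv.Perm (Fin n), ((P₁.withDensity (fun ω => f s (XS ω))).map (fun ω => (ω, s))), ?_, ?_⟩
  swap
  · refine ⟨fun p => X p.1, fun p => p.2.trans (σ p.1), hX.comp measurable_fst, ?_, ?_, ?_⟩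
    · -- measurable fibers of the composed permutation
      have hσm : Measurable σ := measurable_to_countable' fun s => hσ s
      have hρ : Measurable (fun p : Ω₁ × Equiv.Perm (Fin n) => p.2.trans (σ p.1)) :=
        measurable_from_prod_countable_left fun t =>
          show Measurable ((fun u => Equiv.trans t u) ∘ σ) from measurable_from_top.comp hσm
      intro s
      exact hρ (measurableSet_singleton s)
    · -- first marginal is lam
      have hZm : Measurable (fun p : Ω₁ × Equiv.Perm (Fin n) => X p.1) := hX.comp measurable_fst
      ext B hB
      rw [Measure.map_apply hZm hB, Measure.finset_sum_apply]
      have hstep : ∀ s ∈ Finset.univ,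
          ((P₁.withDensity (fun ω => f s (XS ω))).map (fun ω => (ω, s)))
            ((fun p : Ω₁ × Equiv.Perm (Fin n) => X p.1) ⁻¹' B)
          = (P₁.withDensity (fun ω => f s (XS ω))) (X ⁻¹' B) := by
        intro s _
        rw [Measure.map_apply (hpair s) (hZm hB)]
        rfl
      rw [Finset.sum_congr rfl hstep]
      have : ∑ s : Equiv.Perm (Fin n), (P₁.withDensity (fun ω => f s (XS ω))) (X ⁻¹' B)
          = (P₁.withDensity (fun ω => g (XS ω))) (X ⁻¹' B) := by
        have hterm : ∀ s ∈ Finset.univ,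
            (P₁.withDensity (fun ω => f s (XS ω))) (X ⁻¹' B)
            = ∫⁻ ω in X ⁻¹' B, f s (XS ω) ∂P₁ := fun s _ => withDensity_apply _ (hX hB)
        rw [Finset.sum_congr rfl hterm,
          ← lintegral_finset_sum (f := fun s ω => f s (XS ω)) _ (fun s _ => (hfm s).comp hXSm),
          withDensity_apply _ (hX hB)]
      rw [this, withDensity_congr_ae hgXS1, withDensity_one, ← hX_law,
        Measure.map_apply hX hB]
    · -- the permuted law is kappa
      have hWm : Measurable (fun p : Ω₁ × Equiv.Perm (Fin n) => fun i => X p.1 (p.2.trans (σ p.1) i)) := by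
        have : (fun p : Ω₁ × Equiv.Perm (Fin n) => fun i => X p.1 (p.2.trans (σ p.1) i))
            = fun p : Ω₁ × Equiv.Perm (Fin n) => T p.2 (XS p.1) := rfl
        rw [this]
        exact measurable_from_prod_countable_left fun s => (hTmeas s).comp hXSm
      ext B hB
      rw [Measure.map_apply hWm hB, Measure.finset_sum_apply]
      have hstep : ∀ s ∈ Finset.univ,
          ((P₁.withDensity (fun ω => f s (XS ω))).map (fun ω => (ω, s)))
            ((fun p : Ω₁ × Equiv.Perm (Fin n) => fun i => X p.1 (p.2.trans (σ p.1) i)) ⁻¹' B)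
          = P₂ (Y ⁻¹' (T s ⁻¹' B) ∩ {ω | τ ω = s}) := by
        intro s _
        rw [Measure.map_apply (hpair s) (hWm hB)]
        have hpre : (fun ω : Ω₁ => (ω, s)) ⁻¹'
            ((fun p : Ω₁ × Equiv.Perm (Fin n) => fun i => X p.1 (p.2.trans (σ p.1) i)) ⁻¹' B)
            = XS ⁻¹' (T s ⁻¹' B) := rfl
        rw [hpre, withDensity_apply _ (hXSm ((hTmeas s) hB))]
        rw [← setLIntegral_map ((hTmeas s) hB) (hfm s) hXSm, hXσ_law]
        rw [← withDensity_apply _ ((hTmeas s) hB), hwd s]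
        exact hνpB s _ ((hTmeas s) hB)
      rw [Finset.sum_congr rfl hstep]
      -- now compute kappa B
      have hYTm : Measurable YT := measurable_permuted hY hτ
      rw [← hYτ_law, Measure.map_apply hYTm hB]
      have hcover : YT ⁻¹' B = ⋃ s : Equiv.Perm (Fin n), (Y ⁻¹' (T s ⁻¹' B) ∩ {ω | τ ω = s}) := by
        ext ω
        simp only [Set.mem_preimage, Set.mem_iUnion, Set.mem_inter_iff, Set.mem_setOf_eq]
        constructor
        · intro h; exact ⟨τ ω, h, rfl⟩
        · rintro ⟨s, hs, rfl⟩; exact hs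
      rw [hcover, measure_iUnion ?hd2 ?hm2, tsum_fintype]
      case hd2 =>
        intro s t hst
        simp only [Set.disjoint_left]
        rintro ω ⟨-, h1⟩ ⟨-, h2⟩
        exact hst (h1.symm.trans h2)
      case hm2 =>
        exact fun s => (hY ((hTmeas s) hB)).inter (hτ s)
  · -- probability measure
    refine ⟨?_⟩
    rw [Measure.finset_sum_apply]
    have hstep : ∀ s ∈ Finset.univ,
        ((P₁.withDensity (fun ω => f s (XS ω))).map (fun ω => (ω, s))) Set.univ
        = ∫⁻ ω, f s (XS ω) ∂P₁ := by
      intro s _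
      rw [Measure.map_apply (hpair s) MeasurableSet.univ, Set.preimage_univ,
        withDensity_apply _ MeasurableSet.univ, setLIntegral_univ]
    rw [Finset.sum_congr rfl hstep,
      ← lintegral_finset_sum (f := fun s ω => f s (XS ω)) _ (fun s _ => (hfm s).comp hXSm)]
    have hone : ∫⁻ ω, g (XS ω) ∂P₁ = 1 := by
      rw [lintegral_congr_ae hgXS1]
      simp
    exact hone
end

section
/- Let X = (X_1,...,X_n) and Y = (Y_1,...,Y_n) be sequences of real random variables whose entries almost surely have no ties. Then the following are equivalent: (i) the law of Y is a rearrangement of the law of X; (ii) the descending arrangements agree in distribution: Y↓ =d X↓; (iii) the ascending arrangements agree in distribution: Y↑ =d X↑; (iv) the law of Y is a rearrangement of the law of X↓. -/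
open MeasureTheory

/-- The ascending arrangement of a tuple: its entries listed in increasing order. -/
noncomputable def ascArr (n : ℕ) (a : Fin n → ℝ) : Fin n → ℝ := a ∘ Tuple.sort a

/-- The descending arrangement of a tuple: its entries listed in decreasing order. -/
noncomputable def descArr (n : ℕ) (a : Fin n → ℝ) : Fin n → ℝ := fun i => ascArr n a i.rev

open ProbabilityTheory

/-! Everything reduces to equality in law of the ascending arrangements. Permuting a vector
does not change its ascending arrangement, which gives one direction. Conversely, if `X↑ =d Y↑`,
disintegrating with respect to the common ascending arrangement couples `X` and `Y` so that
`X↑ = Y↑` almost surely, and on that coupling the permutation `sort X * (sort Y)⁻¹` rearranges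
`X` into `Y`. The descending arrangement is the ascending one read backwards, and `(X↓)↑ = X↑`. -/

theorem exists_coupling_of_map_eq {α β γ : Type*} [MeasurableSpace α] [MeasurableSpace β]
    [StandardBorelSpace β] [MeasurableSpace γ] [MeasurableEq γ]
    {μ : Measure α} {ν : Measure β} [IsProbabilityMeasure μ] [IsProbabilityMeasure ν]
    {f : α → γ} {g : β → γ} (hf : Measurable f) (hg : Measurable g) (h : μ.map f = ν.map g) :
    ∃ π : Measure (α × β), IsProbabilityMeasure π ∧ π.fst = μ ∧ π.snd = ν ∧
      ∀ᵐ p ∂π, f p.1 = g p.2 := by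
  have := nonempty_of_isProbabilityMeasure ν
  have hρ : Measurable fun y => (g y, y) := hg.prodMk measurable_id
  set ρ : Measure (γ × β) := ν.map fun y => (g y, y)
  have hρ_fst : ρ.fst = μ.map f := by
    rw [h, Measure.fst, Measure.map_map measurable_fst hρ]; rfl
  have hρ_snd : ρ.snd = ν := by
    rw [Measure.snd, Measure.map_map measurable_snd hρ]; exact Measure.map_id
  have hgraph : MeasurableSet {p : γ × β | p.1 = g p.2} :=
    measurableSet_eq_fun measurable_fst (hg.comp measurable_snd)
  -- given `x`, draw `y` from the conditional law of `ν` given `g y = f x`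
  refine ⟨μ ⊗ₘ ρ.condKernel.comap f hf, inferInstance, Measure.fst_compProd _ _, ?_, ?_⟩
  · rw [Measure.snd_compProd, ← Kernel.comp_deterministic_eq_comap, ← Measure.comp_assoc,
      Measure.deterministic_comp_eq_map, ← hρ_fst, ← Measure.snd_compProd,
      ρ.disintegrate ρ.condKernel, hρ_snd]
  · have hdiag : ∀ᵐ p ∂ρ, p.1 = g p.2 :=
      (ae_map_iff hρ.aemeasurable hgraph).2 (ae_of_all _ fun _ => rfl)
    rw [← ρ.disintegrate ρ.condKernel, Measure.ae_compProd_iff hgraph, hρ_fst] at hdiag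
    exact (Measure.ae_compProd_iff (measurableSet_eq_fun (hf.comp measurable_fst)
      (hg.comp measurable_snd))).2 (ae_of_ae_map hf.aemeasurable hdiag)

theorem measurable_comp_perm {ι α β : Type*} [Finite ι] [MeasurableSpace α] [MeasurableSpace β]
    {X : α → ι → β} {σ : α → Equiv.Perm ι} (hX : Measurable X)
    (hσ : ∀ s, MeasurableSet {a | σ a = s}) :
    Measurable fun a i => X a (σ a i) := by
  intro t ht
  have hpieces : (fun a i => X a (σ a i)) ⁻¹' t
      = ⋃ s, {a | σ a = s} ∩ (fun a i => X a (s i)) ⁻¹' t := by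
    ext a; simp
  rw [hpieces]
  exact .iUnion fun s => (hσ s).inter ((by fun_prop : Measurable fun a i => X a (s i)) ht)

variable {n : ℕ}

theorem measurableSet_sort_eq (s : Equiv.Perm (Fin n)) :
    MeasurableSet {a : Fin n → ℝ | Tuple.sort a = s} := by
  simp_rw [eq_comm (a := Tuple.sort _), Tuple.eq_sort_iff, Monotone, Function.comp_apply]
  measurability

theorem measurable_ascArr : Measurable (ascArr n) :=
  measurable_comp_perm measurable_id measurableSet_sort_eq

theorem measurable_descArr : Measurable (descArr n) :=
  measurable_pi_lambda _ fun i => (measurable_pi_apply i.rev).comp measurable_ascArr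

theorem ascArr_comp_perm (a : Fin n → ℝ) (s : Equiv.Perm (Fin n)) :
    ascArr n (a ∘ s) = ascArr n a :=
  Tuple.comp_perm_comp_sort_eq_comp_sort

theorem ascArr_comp_descArr : ascArr n ∘ descArr n = ascArr n :=
  funext fun a => ascArr_comp_perm a (Fin.revPerm.trans (Tuple.sort a))

theorem comp_sort_mul_inv_sort_of_ascArr_eq {x y : Fin n → ℝ} (h : ascArr n x = ascArr n y) :
    x ∘ (Tuple.sort x * (Tuple.sort y)⁻¹ : Equiv.Perm (Fin n)) = y := by
  funext i
  simpa [ascArr] using congrFun h ((Tuple.sort y)⁻¹ i)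

theorem map_descArr_eq_iff_map_ascArr_eq {μ ν : Measure (Fin n → ℝ)} :
    μ.map (descArr n) = ν.map (descArr n) ↔ μ.map (ascArr n) = ν.map (ascArr n) := by
  have hrev : Measurable fun (v : Fin n → ℝ) (i : Fin n) => v i.rev := by fun_prop
  have hdesc : descArr n = (fun v i => v i.rev) ∘ ascArr n := rfl
  have hasc : ascArr n = (fun v i => v i.rev) ∘ descArr n := by
    funext a i; simp [descArr]
  constructor <;> intro h
  · rw [hasc, ← Measure.map_map hrev measurable_descArr, ← Measure.map_map hrev measurable_descArr,
      h]
  · rw [hdesc, ← Measure.map_map hrev measurable_ascArr, ← Measure.map_map hrev measurable_ascArr,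
      h]

theorem isRearrangement_iff_map_ascArr_eq (lam nu : Measure (Fin n → ℝ))
    [IsProbabilityMeasure lam] [IsProbabilityMeasure nu] :
    IsRearrangement n lam nu ↔ nu.map (ascArr n) = lam.map (ascArr n) := by
  constructor
  · rintro ⟨Ω, _, P, _, X, σ, hX, hσ, rfl, rfl⟩
    rw [Measure.map_map measurable_ascArr (measurable_comp_perm hX hσ),
      Measure.map_map measurable_ascArr hX]
    exact congrArg (P.map ·) (funext fun ω => ascArr_comp_perm (X ω) (σ ω))
  · intro h
    obtain ⟨π, hπ, hπ_fst, hπ_snd, hπ_ascArr⟩ :=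
      exists_coupling_of_map_eq measurable_ascArr measurable_ascArr h.symm
    have hσ (s : Equiv.Perm (Fin n)) : MeasurableSet
        {p : (Fin n → ℝ) × (Fin n → ℝ) | Tuple.sort p.1 * (Tuple.sort p.2)⁻¹ = s} := by
      have hpieces : {p : (Fin n → ℝ) × (Fin n → ℝ) | Tuple.sort p.1 * (Tuple.sort p.2)⁻¹ = s}
          = ⋃ u, {p | Tuple.sort p.2 = u} ∩ {p | Tuple.sort p.1 = s * u} := by
        ext p; simp [mul_inv_eq_iff_eq_mul]
      rw [hpieces]
      exact .iUnion fun u => (measurable_snd (measurableSet_sort_eq u)).inter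
        (measurable_fst (measurableSet_sort_eq (s * u)))
    refine ⟨_, inferInstance, π, hπ, Prod.fst, fun p => Tuple.sort p.1 * (Tuple.sort p.2)⁻¹,
      measurable_fst, hσ, hπ_fst, ?_⟩
    rw [← hπ_snd]
    exact Measure.map_congr (hπ_ascArr.mono fun _ => comp_sort_mul_inv_sort_of_ascArr_eq)

theorem isRearrangement_tfae_general {n : ℕ}
    {Ω₁ : Type} [MeasurableSpace Ω₁] (P₁ : Measure Ω₁) [IsProbabilityMeasure P₁]
    {Ω₂ : Type} [MeasurableSpace Ω₂] (P₂ : Measure Ω₂) [IsProbabilityMeasure P₂]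
    (X : Ω₁ → Fin n → ℝ) (Y : Ω₂ → Fin n → ℝ)
    (hX : Measurable X) (hY : Measurable Y) :
    (IsRearrangement n (P₁.map X) (P₂.map Y)
        ↔ P₂.map (fun ω => descArr n (Y ω)) = P₁.map (fun ω => descArr n (X ω)))
    ∧ (IsRearrangement n (P₁.map X) (P₂.map Y)
        ↔ P₂.map (fun ω => ascArr n (Y ω)) = P₁.map (fun ω => ascArr n (X ω)))
    ∧ (IsRearrangement n (P₁.map X) (P₂.map Y)
        ↔ IsRearrangement n (P₁.map (fun ω => descArr n (X ω))) (P₂.map Y)) := by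
  have hXd : P₁.map (fun ω => descArr n (X ω)) = (P₁.map X).map (descArr n) :=
    (Measure.map_map measurable_descArr hX).symm
  have hYd : P₂.map (fun ω => descArr n (Y ω)) = (P₂.map Y).map (descArr n) :=
    (Measure.map_map measurable_descArr hY).symm
  have hXa : P₁.map (fun ω => ascArr n (X ω)) = (P₁.map X).map (ascArr n) :=
    (Measure.map_map measurable_ascArr hX).symm
  have hYa : P₂.map (fun ω => ascArr n (Y ω)) = (P₂.map Y).map (ascArr n) :=
    (Measure.map_map measurable_ascArr hY).symm
  have := Measure.isProbabilityMeasure_map (μ := P₁) hX.aemeasurable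
  have := Measure.isProbabilityMeasure_map (μ := P₂) hY.aemeasurable
  have := Measure.isProbabilityMeasure_map (μ := P₁.map X) measurable_descArr.aemeasurable
  rw [hXd, hYd, hXa, hYa, isRearrangement_iff_map_ascArr_eq, isRearrangement_iff_map_ascArr_eq,
    Measure.map_map measurable_ascArr measurable_descArr, ascArr_comp_descArr,
    map_descArr_eq_iff_map_ascArr_eq]
  exact ⟨Iff.rfl, Iff.rfl, Iff.rfl⟩

/-- For sequences `X`, `Y` of real random variables whose entries almost surely have no
ties, the following are equivalent: (i) the law of `Y` is a rearrangement of the law of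
`X`; (ii) `Y↓ =d X↓`; (iii) `Y↑ =d X↑`; (iv) the law of `Y` is a rearrangement of the law
of `X↓`. -/
theorem isRearrangement_tfae {n : ℕ}
    {Ω₁ : Type} [MeasurableSpace Ω₁] (P₁ : Measure Ω₁) [IsProbabilityMeasure P₁]
    {Ω₂ : Type} [MeasurableSpace Ω₂] (P₂ : Measure Ω₂) [IsProbabilityMeasure P₂]
    (X : Ω₁ → Fin n → ℝ) (Y : Ω₂ → Fin n → ℝ)
    (hX : Measurable X) (hY : Measurable Y)
    (hXties : ∀ᵐ ω ∂P₁, ∀ i j : Fin n, i ≠ j → X ω i ≠ X ω j)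
    (hYties : ∀ᵐ ω ∂P₂, ∀ i j : Fin n, i ≠ j → Y ω i ≠ Y ω j) :
    (IsRearrangement n (P₁.map X) (P₂.map Y)
        ↔ P₂.map (fun ω => descArr n (Y ω)) = P₁.map (fun ω => descArr n (X ω)))
    ∧ (IsRearrangement n (P₁.map X) (P₂.map Y)
        ↔ P₂.map (fun ω => ascArr n (Y ω)) = P₁.map (fun ω => ascArr n (X ω)))
    ∧ (IsRearrangement n (P₁.map X) (P₂.map Y)
        ↔ IsRearrangement n (P₁.map (fun ω => descArr n (X ω))) (P₂.map Y)) :=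
  isRearrangement_tfae_general P₁ P₂ X Y hX hY
end

section
/- For every permutation s ∈ S_n and all indices j ≤ k < k', the rank array of s satisfies the updating formula ρ_{j,k'}(s) = ρ_{j,k}(s) + #{ℓ : k < ℓ ≤ k' and ρ_{ℓ,ℓ}(s) ≤ ρ_{j,ℓ-1}(s)}. -/
/-- The rank array of a permutation `s` of `{1,...,n}` (0-indexed: `rho s j k` is the
paper's `ρ_{j+1,k+1}(s) = 1 + #{i ≤ k : s(i) < s(j)}`, indices `1`-based). -/
def rho {n : ℕ} (s : Equiv.Perm (Fin n)) (j k : Fin n) : ℕ :=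
  1 + (Finset.univ.filter (fun i : Fin n => i ≤ k ∧ s i < s j)).card

lemma rho_key {n : ℕ} (s : Equiv.Perm (Fin n)) (j ℓ : Fin n) (hjl : j < ℓ) :
    (rho s ℓ ℓ ≤ rho s j ⟨ℓ.1 - 1, lt_of_le_of_lt (Nat.sub_le _ _) ℓ.2⟩) ↔ s ℓ < s j := by
  have hpos : 0 < ℓ.1 := Nat.pos_of_ne_zero (by
    intro h; exact absurd (Fin.lt_def.mp hjl) (by omega))
  have hA : (Finset.univ.filter (fun i : Fin n => i ≤ ℓ ∧ s i < s ℓ)) =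
      (Finset.univ.filter (fun i : Fin n => i < ℓ ∧ s i < s ℓ)) := by
    apply Finset.filter_congr
    intro i _
    constructor
    · rintro ⟨h1, h2⟩
      rcases lt_or_eq_of_le h1 with h | h
      · exact ⟨h, h2⟩
      · subst h; exact absurd h2 (lt_irrefl _)
    · rintro ⟨h1, h2⟩; exact ⟨le_of_lt h1, h2⟩
  have hB : (Finset.univ.filter (fun i : Fin n =>
        i ≤ (⟨ℓ.1 - 1, lt_of_le_of_lt (Nat.sub_le _ _) ℓ.2⟩ : Fin n) ∧ s i < s j)) =
      (Finset.univ.filter (fun i : Fin n => i < ℓ ∧ s i < s j)) := by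
    apply Finset.filter_congr
    intro i _
    have : i ≤ (⟨ℓ.1 - 1, lt_of_le_of_lt (Nat.sub_le _ _) ℓ.2⟩ : Fin n) ↔ i < ℓ := by
      rw [Fin.le_def, Fin.lt_def]; simp only []; omega
    rw [this]
  unfold rho
  rw [hA, hB]
  constructor
  · intro h
    by_contra hc
    push_neg at hc
    have hne : s j ≠ s ℓ := fun he => absurd (s.injective he) (ne_of_lt hjl)
    have hlt : s j < s ℓ := lt_of_le_of_ne hc hne
    -- then B ∪ {j} ⊆ A with j ∉ B, contradiction with card
    have hsub : (Finset.univ.filter (fun i : Fin n => i < ℓ ∧ s i < s j)) ⊂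
        (Finset.univ.filter (fun i : Fin n => i < ℓ ∧ s i < s ℓ)) := by
      constructor
      · intro i hi
        simp only [Finset.mem_filter, Finset.mem_univ, true_and] at hi ⊢
        exact ⟨hi.1, lt_trans hi.2 hlt⟩
      · intro hcon
        have hj : j ∈ (Finset.univ.filter (fun i : Fin n => i < ℓ ∧ s i < s ℓ)) := by
          simp only [Finset.mem_filter, Finset.mem_univ, true_and]
          exact ⟨hjl, hlt⟩
        have := hcon hj
        simp only [Finset.mem_filter, Finset.mem_univ, true_and] at this
        exact absurd this.2 (lt_irrefl _)
    have := Finset.card_lt_card hsub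
    omega
  · intro h
    have hsub : (Finset.univ.filter (fun i : Fin n => i < ℓ ∧ s i < s ℓ)) ⊆
        (Finset.univ.filter (fun i : Fin n => i < ℓ ∧ s i < s j)) := by
      intro i hi
      simp only [Finset.mem_filter, Finset.mem_univ, true_and] at hi ⊢
      exact ⟨hi.1, lt_trans hi.2 h⟩
    have := Finset.card_le_card hsub
    omega

/-- Updating formula for the rank array: for `j ≤ k < k'`,
`ρ_{j,k'}(s) = ρ_{j,k}(s) + #{ℓ : k < ℓ ≤ k' and ρ_{ℓ,ℓ}(s) ≤ ρ_{j,ℓ-1}(s)}`. -/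
theorem rho_update {n : ℕ} (s : Equiv.Perm (Fin n)) (j k k' : Fin n)
    (hjk : j ≤ k) (hkk' : k < k') :
    rho s j k' = rho s j k +
      (Finset.univ.filter (fun ℓ : Fin n => k < ℓ ∧ ℓ ≤ k' ∧
        rho s ℓ ℓ ≤ rho s j ⟨ℓ.1 - 1, lt_of_le_of_lt (Nat.sub_le _ _) ℓ.2⟩)).card := by
  have hfilter : (Finset.univ.filter (fun ℓ : Fin n => k < ℓ ∧ ℓ ≤ k' ∧
        rho s ℓ ℓ ≤ rho s j ⟨ℓ.1 - 1, lt_of_le_of_lt (Nat.sub_le _ _) ℓ.2⟩)) =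
      (Finset.univ.filter (fun ℓ : Fin n => k < ℓ ∧ ℓ ≤ k' ∧ s ℓ < s j)) := by
    apply Finset.filter_congr
    intro ℓ _
    constructor
    · rintro ⟨h1, h2, h3⟩
      exact ⟨h1, h2, (rho_key s j ℓ (lt_of_le_of_lt hjk h1)).mp h3⟩
    · rintro ⟨h1, h2, h3⟩
      exact ⟨h1, h2, (rho_key s j ℓ (lt_of_le_of_lt hjk h1)).mpr h3⟩
  rw [hfilter]
  unfold rho
  have hsplit : (Finset.univ.filter (fun i : Fin n => i ≤ k' ∧ s i < s j)) =
      (Finset.univ.filter (fun i : Fin n => i ≤ k ∧ s i < s j)) ∪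
      (Finset.univ.filter (fun ℓ : Fin n => k < ℓ ∧ ℓ ≤ k' ∧ s ℓ < s j)) := by
    ext i
    simp only [Finset.mem_filter, Finset.mem_univ, true_and, Finset.mem_union]
    constructor
    · rintro ⟨h1, h2⟩
      rcases le_or_gt i k with h | h
      · exact Or.inl ⟨h, h2⟩
      · exact Or.inr ⟨h, h1, h2⟩
    · rintro (⟨h1, h2⟩ | ⟨h1, h2, h3⟩)
      · exact ⟨le_trans h1 (le_of_lt hkk'), h2⟩
      · exact ⟨h2, h3⟩
  have hdisj : Disjoint (Finset.univ.filter (fun i : Fin n => i ≤ k ∧ s i < s j))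
      (Finset.univ.filter (fun ℓ : Fin n => k < ℓ ∧ ℓ ≤ k' ∧ s ℓ < s j)) := by
    rw [Finset.disjoint_left]
    intro i hi hi'
    simp only [Finset.mem_filter, Finset.mem_univ, true_and] at hi hi'
    exact absurd hi.1 (not_le_of_gt hi'.1)
  rw [hsplit, Finset.card_union_of_disjoint hdisj]
  omega
end

section
/- Let X = (X_1, X_2) be i.u.d. and let Y = (Y_1, Y_2) be a rearrangement of X whose initial rank R_2 satisfies the strong rank independence condition: for some fixed θ ∈ [0,1], P(R_2 = 2 | Y_1 ∈ A) = θ for every measurable A ⊂ I with Leb(A) > 0. Then Y is equal in distribution to the travellers' process with parameter θ: Y =d Y_θ. Equivalently, almost surely f_θ(Y_1) < f_θ(Y_2). -/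
open MeasureTheory

/-- `X = (X_1,...,X_n)` is i.u.d. -/
def IsIUD {Ω : Type} [MeasurableSpace Ω] (P : Measure Ω) {n : ℕ}
    (X : Ω → Fin n → ℝ) : Prop :=
  (∀ i, Measurable fun ω => X ω i) ∧
  ProbabilityTheory.iIndepFun (fun i ω => X ω i) P ∧
  ∀ i, P.map (fun ω => X ω i) = volume.restrict (Set.Icc (0:ℝ) 1)

/-- The initial rank `R_{k+1}` (1-based `R_k`): `1 + #{i < k : y_i > y_k}`. -/
noncomputable def irank {n : ℕ} (y : Fin n → ℝ) (k : Fin n) : ℕ :=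
  1 + (Finset.univ.filter (fun i : Fin n => i < k ∧ y k < y i)).card

/-- The "V-shaped" function `f_θ` of the travellers' process. -/
noncomputable def fTheta (θ : ℝ) (x : ℝ) : ℝ :=
  if x ≤ θ then (θ - x) / θ else (x - θ) / (1 - θ)


/-! For `0 < t < 1` the superlevel set `U_t = {x ∈ [0,1] | t < f_θ x}` is a left interval of
length `θ (1 - t)` and a right interval of length `(1 - θ)(1 - t)`. A rearrangement does not move
the event `{Y_1, Y_2 ∈ B}`, so the law of `Y` gives it mass `Leb(B)²`. On the left interval
`Y_2 < Y_1` forces `Y_2` into the interval as well, so strong rank independence gives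
`θ P(Y_1 ∈ left) ≤ (θ (1 - t))²`; symmetrically `(1 - θ) P(Y_1 ∈ right) ≤ ((1 - θ)(1 - t))²`.
Hence `P(Y_1 ∈ U_t) ≤ (1 - t)² = P(Y_1, Y_2 ∈ U_t)`, so almost surely `Y_1 ∈ U_t` implies
`Y_2 ∈ U_t`; over all rational `t` this is `f_θ(Y_1) ≤ f_θ(Y_2)`. -/

open Set ENNReal

lemma irank_one_eq_two_iff (y : Fin 2 → ℝ) : irank y 1 = 2 ↔ y 1 < y 0 := by
  have : (Finset.univ.filter fun i : Fin 2 => i < 1 ∧ y 1 < y i) =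
      if y 1 < y 0 then {0} else ∅ := by
    split_ifs with h <;> ext i <;> fin_cases i <;> simp [h]
  rw [irank, this]
  split_ifs with h <;> simp [h]

@[fun_prop]
lemma measurable_fTheta (θ : ℝ) : Measurable (fTheta θ) :=
  Measurable.ite (measurableSet_le measurable_id measurable_const)
    ((measurable_const.sub measurable_id).div_const θ)
    ((measurable_id.sub measurable_const).div_const (1 - θ))

lemma fTheta_mem_Icc {θ x : ℝ} (hθ : θ ∈ Icc (0:ℝ) 1) (hx : x ∈ Icc (0:ℝ) 1) :
    fTheta θ x ∈ Icc (0:ℝ) 1 := by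
  obtain ⟨hθ0, hθ1⟩ := hθ
  obtain ⟨hx0, hx1⟩ := hx
  unfold fTheta
  split_ifs with h
  · rcases hθ0.eq_or_lt with rfl | hθpos
    · simp
    · exact ⟨div_nonneg (by linarith) hθ0, (div_le_one hθpos).2 (by linarith)⟩
  · have hθ1' : θ < 1 := by linarith
    exact ⟨div_nonneg (by linarith) (by linarith), (div_le_one (by linarith)).2 (by linarith)⟩

lemma lt_fTheta_iff {θ t x : ℝ} (hθ : θ ∈ Icc (0:ℝ) 1) (ht : t ∈ Ioo (0:ℝ) 1)
    (hx : x ∈ Icc (0:ℝ) 1) :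
    t < fTheta θ x ↔ x ∈ Ico 0 (θ * (1 - t)) ∪ Ioc (1 - (1 - θ) * (1 - t)) 1 := by
  obtain ⟨hθ0, hθ1⟩ := hθ
  obtain ⟨ht0, ht1⟩ := ht
  obtain ⟨hx0, hx1⟩ := hx
  simp only [fTheta, mem_union, mem_Ico, mem_Ioc, hx0, hx1, true_and, and_true]
  split_ifs with h
  · rcases hθ0.eq_or_lt with rfl | hθpos
    · have hx : x = 0 := le_antisymm h hx0
      subst hx
      constructor
      · intro h'; norm_num at h'; linarith
      · rintro (h' | h') <;> linarith
    · rw [lt_div_iff₀ hθpos]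
      constructor
      · intro h'; left; nlinarith
      · rintro (h' | h') <;> nlinarith
  · have hθ1' : θ < 1 := by linarith
    rw [lt_div_iff₀ (by linarith)]
    constructor
    · intro h'; right; nlinarith
    · rintro (h' | h') <;> nlinarith

lemma preimage_rearrange_univ_pi_const {Ω ι α : Type*} (X : Ω → ι → α)
    (σ : Ω → Equiv.Perm ι) (B : Set α) :
    (fun ω i => X ω (σ ω i)) ⁻¹' univ.pi (fun _ => B) = X ⁻¹' univ.pi (fun _ => B) := by
  ext ω
  simp only [mem_preimage, mem_univ_pi]
  exact (σ ω).forall_congr_right (q := fun j => X ω j ∈ B)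

lemma IsIUD.measure_preimage_univ_pi_const {Ω : Type} [MeasurableSpace Ω] {P : Measure Ω}
    {n : ℕ} {X : Ω → Fin n → ℝ} (hX : IsIUD P X) {B : Set ℝ} (hB : MeasurableSet B) :
    P (X ⁻¹' univ.pi fun _ => B) = volume (B ∩ Icc (0:ℝ) 1) ^ n := by
  obtain ⟨hXm, hXi, hXd⟩ := hX
  have hcoord (i : Fin n) : P ((fun ω => X ω i) ⁻¹' B) = volume (B ∩ Icc (0:ℝ) 1) := by
    rw [← Measure.map_apply (hXm i) hB, hXd i, Measure.restrict_apply hB]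
  have hpi : X ⁻¹' univ.pi (fun _ => B) = ⋂ i ∈ Finset.univ, (fun ω => X ω i) ⁻¹' B := by
    ext ω; simp
  rw [hpi, hXi.measure_inter_preimage_eq_mul Finset.univ (fun _ _ => hB)]
  simp [hcoord]

lemma IsIUD.map_rearrange_univ_pi_const {Ω : Type} [MeasurableSpace Ω] {P : Measure Ω}
    {n : ℕ} {X : Ω → Fin n → ℝ} (hX : IsIUD P X) {σ : Ω → Equiv.Perm (Fin n)}
    (hXσ : AEMeasurable (fun ω i => X ω (σ ω i)) P) {B : Set ℝ} (hB : MeasurableSet B) :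
    P.map (fun ω i => X ω (σ ω i)) (univ.pi fun _ => B) = volume (B ∩ Icc (0:ℝ) 1) ^ n := by
  rw [Measure.map_apply_of_aemeasurable hXσ (.univ_pi fun _ => hB),
    preimage_rearrange_univ_pi_const, hX.measure_preimage_univ_pi_const hB]

/-- Strong rank independence for the law `ν` of `(Y_1, Y_2)`; the event `R_2 = 2` is `Y_2 < Y_1`. -/
def StrongRankIndep (ν : Measure (Fin 2 → ℝ)) (θ : ℝ) : Prop :=
  ∀ A ⊆ Icc (0:ℝ) 1, MeasurableSet A → 0 < volume A →
    ν ({y | y 1 < y 0} ∩ {y | y 0 ∈ A}) = ENNReal.ofReal θ * ν {y | y 0 ∈ A}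

section Law

variable {ν : Measure (Fin 2 → ℝ)} {θ : ℝ}

lemma StrongRankIndep.compl [IsFiniteMeasure ν] (hsri : StrongRankIndep ν θ) (hθ : 0 ≤ θ)
    {A : Set ℝ} (hA : A ⊆ Icc (0:ℝ) 1) (hAm : MeasurableSet A) (hApos : 0 < volume A) :
    ν ({y | y 1 < y 0}ᶜ ∩ {y | y 0 ∈ A}) = ENNReal.ofReal (1 - θ) * ν {y | y 0 ∈ A} := by
  have hsplit := measure_inter_add_sdiff (μ := ν) {y : Fin 2 → ℝ | y 0 ∈ A}
    (measurableSet_lt (measurable_pi_apply 1) (measurable_pi_apply 0))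
  rw [inter_comm, hsri A hA hAm hApos, add_comm] at hsplit
  rw [inter_comm, ← sdiff_eq, ENNReal.eq_sub_of_add_eq (by finiteness) hsplit,
    ofReal_sub 1 hθ, ofReal_one, ENNReal.sub_mul fun _ _ => measure_ne_top _ _, one_mul]

lemma measure_fst_mem_le_of_cond {E : Set (Fin 2 → ℝ)} {A : Set ℝ}
    {p s : ℝ} (hp : 0 < p) (hcond : ν (E ∩ {y | y 0 ∈ A}) = ENNReal.ofReal p * ν {y | y 0 ∈ A})
    (hsub : (E ∩ {y | y 0 ∈ A} : Set (Fin 2 → ℝ)) ≤ᵐ[ν] univ.pi fun _ => A)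
    (hsq : ν (univ.pi fun _ => A) = ENNReal.ofReal (p * s) ^ 2) :
    ν {y | y 0 ∈ A} ≤ ENNReal.ofReal p * ENNReal.ofReal s ^ 2 := by
  refine (ENNReal.mul_le_mul_iff_right (ofReal_pos.2 hp).ne' ofReal_ne_top).1 ?_
  calc ENNReal.ofReal p * ν {y | y 0 ∈ A} = ν (E ∩ {y | y 0 ∈ A}) := hcond.symm
    _ ≤ ν (univ.pi fun _ => A) := measure_mono_ae hsub
    _ = ENNReal.ofReal p * (ENNReal.ofReal p * ENNReal.ofReal s ^ 2) := by
      rw [hsq, ofReal_mul hp.le]; ring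

lemma measure_fst_mem_Ico_le (hθ : θ ∈ Icc (0:ℝ) 1) (hbox : ∀ᵐ y ∂ν, ∀ i, y i ∈ Icc (0:ℝ) 1)
    (hsq : ∀ B ⊆ Icc (0:ℝ) 1, MeasurableSet B → ν (univ.pi fun _ => B) = volume B ^ 2)
    (hsri : StrongRankIndep ν θ) {s : ℝ} (hs : s ∈ Icc (0:ℝ) 1) :
    ν {y | y 0 ∈ Ico 0 (θ * s)} ≤ ENNReal.ofReal θ * ENNReal.ofReal s ^ 2 := by
  rcases (mul_nonneg hθ.1 hs.1).eq_or_lt with h | h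
  · simp [← h]
  have hA : Ico 0 (θ * s) ⊆ Icc (0:ℝ) 1 :=
    Ico_subset_Icc_self.trans (Icc_subset_Icc_right (mul_le_one₀ hθ.2 hs.1 hs.2))
  refine measure_fst_mem_le_of_cond (pos_of_mul_pos_left h hs.1)
    (hsri _ hA measurableSet_Ico (by simpa using h)) ?_
    (by rw [hsq _ hA measurableSet_Ico, Real.volume_Ico, sub_zero])
  filter_upwards [hbox] with y hy ⟨hlt, hy0⟩ i _
  simp only [mem_ofPred_eq] at hlt hy0
  fin_cases i
  exacts [hy0, ⟨(hy 1).1, hlt.trans hy0.2⟩]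

lemma measure_fst_mem_Ioc_le [IsFiniteMeasure ν] (hθ : θ ∈ Icc (0:ℝ) 1)
    (hbox : ∀ᵐ y ∂ν, ∀ i, y i ∈ Icc (0:ℝ) 1)
    (hsq : ∀ B ⊆ Icc (0:ℝ) 1, MeasurableSet B → ν (univ.pi fun _ => B) = volume B ^ 2)
    (hsri : StrongRankIndep ν θ) {s : ℝ} (hs : s ∈ Icc (0:ℝ) 1) :
    ν {y | y 0 ∈ Ioc (1 - (1 - θ) * s) 1} ≤ ENNReal.ofReal (1 - θ) * ENNReal.ofReal s ^ 2 := by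
  rcases (mul_nonneg (sub_nonneg.2 hθ.2) hs.1).eq_or_lt with h | h
  · simp [← h]
  have hA : Ioc (1 - (1 - θ) * s) 1 ⊆ Icc (0:ℝ) 1 :=
    Ioc_subset_Icc_self.trans (Icc_subset_Icc_left
      (sub_nonneg.2 (mul_le_one₀ (by linarith [hθ.1]) hs.1 hs.2)))
  refine measure_fst_mem_le_of_cond (pos_of_mul_pos_left h hs.1)
    (hsri.compl hθ.1 hA measurableSet_Ioc (by simpa using h)) ?_
    (by rw [hsq _ hA measurableSet_Ioc, Real.volume_Ioc]; ring_nf)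
  filter_upwards [hbox] with y hy ⟨hle, hy0⟩ i _
  simp only [mem_compl_iff, mem_ofPred_eq, not_lt] at hle hy0
  fin_cases i
  exacts [hy0, ⟨hy0.1.trans_le hle, (hy 1).2⟩]

lemma ae_lt_fTheta_snd_of_lt_fst [IsFiniteMeasure ν] (hθ : θ ∈ Icc (0:ℝ) 1)
    (hbox : ∀ᵐ y ∂ν, ∀ i, y i ∈ Icc (0:ℝ) 1)
    (hsq : ∀ B ⊆ Icc (0:ℝ) 1, MeasurableSet B → ν (univ.pi fun _ => B) = volume B ^ 2)
    (hsri : StrongRankIndep ν θ) {t : ℝ} (ht : t ∈ Ioo (0:ℝ) 1) :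
    ∀ᵐ y ∂ν, t < fTheta θ (y 0) → t < fTheta θ (y 1) := by
  obtain ⟨hθ0, hθ1⟩ := hθ
  have hs : 1 - t ∈ Icc (0:ℝ) 1 := ⟨by linarith [ht.2], by linarith [ht.1]⟩
  set L := Ico 0 (θ * (1 - t))
  set R := Ioc (1 - (1 - θ) * (1 - t)) 1
  have hU : L ∪ R ⊆ Icc 0 1 := by
    rintro x (⟨hx0, hx1⟩ | ⟨hx0, hx1⟩) <;> constructor <;> nlinarith [hs.1, hs.2]
  have hUm : MeasurableSet (L ∪ R) := measurableSet_Ico.union measurableSet_Ioc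
  have hvol : volume (L ∪ R) = ENNReal.ofReal (1 - t) := by
    have hLR : Disjoint L R :=
      disjoint_left.2 fun x hL hR => by nlinarith [hL.2, hR.1, hs.1, hs.2]
    rw [measure_union hLR measurableSet_Ioc, Real.volume_Ico, Real.volume_Ioc,
      ← ofReal_add (by nlinarith [hs.1]) (by nlinarith [hs.1, hs.2])]
    ring_nf
  have hmarg : ν {y | y 0 ∈ L ∪ R} ≤ ENNReal.ofReal (1 - t) ^ 2 := calc
    ν {y | y 0 ∈ L ∪ R} = ν ({y | y 0 ∈ L} ∪ {y | y 0 ∈ R}) := rfl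
    _ ≤ ν {y | y 0 ∈ L} + ν {y | y 0 ∈ R} := measure_union_le _ _
    _ ≤ ENNReal.ofReal θ * ENNReal.ofReal (1 - t) ^ 2
        + ENNReal.ofReal (1 - θ) * ENNReal.ofReal (1 - t) ^ 2 :=
      add_le_add (measure_fst_mem_Ico_le ⟨hθ0, hθ1⟩ hbox hsq hsri hs)
        (measure_fst_mem_Ioc_le ⟨hθ0, hθ1⟩ hbox hsq hsri hs)
    _ = ENNReal.ofReal (1 - t) ^ 2 := by
      rw [← add_mul, ← ofReal_add hθ0 (sub_nonneg.2 hθ1), add_sub_cancel, ofReal_one, one_mul]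
  have hnull : ν ({y | y 0 ∈ L ∪ R} \ univ.pi fun _ => L ∪ R) = 0 := by
    rw [measure_sdiff (s₁ := {y : Fin 2 → ℝ | y 0 ∈ L ∪ R}) (s₂ := univ.pi fun _ => L ∪ R)
      (fun y hy => hy 0 (mem_univ 0)) (MeasurableSet.univ_pi fun _ => hUm).nullMeasurableSet
      (measure_ne_top _ _), hsq _ hU hUm, hvol]
    exact tsub_eq_zero_of_le hmarg
  filter_upwards [hbox, measure_eq_zero_iff_ae_notMem.1 hnull] with y hy hyU h0
  rw [lt_fTheta_iff ⟨hθ0, hθ1⟩ ht (hy 0)] at h0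
  rw [lt_fTheta_iff ⟨hθ0, hθ1⟩ ht (hy 1)]
  exact not_not.1 (fun h => hyU ⟨h0, h⟩) 1 (mem_univ 1)

theorem ae_fTheta_fst_le_snd [IsFiniteMeasure ν] (hθ : θ ∈ Icc (0:ℝ) 1)
    (hbox : ∀ᵐ y ∂ν, ∀ i, y i ∈ Icc (0:ℝ) 1)
    (hsq : ∀ B ⊆ Icc (0:ℝ) 1, MeasurableSet B → ν (univ.pi fun _ => B) = volume B ^ 2)
    (hsri : StrongRankIndep ν θ) :
    ∀ᵐ y ∂ν, fTheta θ (y 0) ≤ fTheta θ (y 1) := by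
  have hlevel : ∀ᵐ y ∂ν, ∀ q : ℚ, (q : ℝ) ∈ Ioo (0:ℝ) 1 →
      (q : ℝ) < fTheta θ (y 0) → (q : ℝ) < fTheta θ (y 1) := by
    refine ae_all_iff.2 fun q => ?_
    by_cases hq : (q : ℝ) ∈ Ioo (0:ℝ) 1
    · filter_upwards [ae_lt_fTheta_snd_of_lt_fst hθ hbox hsq hsri hq] with y hy _ using hy
    · exact .of_forall fun _ h => absurd h hq
  filter_upwards [hbox, hlevel] with y hy hq
  by_contra! h
  obtain ⟨q, hq1, hq0⟩ := exists_rat_btwn h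
  exact lt_asymm hq1 (hq q ⟨(fTheta_mem_Icc hθ (hy 1)).1.trans_lt hq1,
    hq0.trans_le (fTheta_mem_Icc hθ (hy 0)).2⟩ hq0)

end Law

theorem n2_strong_rank_independence_characterizes_travellers_general
    {Ω₁ : Type} [MeasurableSpace Ω₁] (P₁ : Measure Ω₁)
    (X : Ω₁ → Fin 2 → ℝ) (hX : IsIUD P₁ X)
    (σ : Ω₁ → Equiv.Perm (Fin 2))
    {Ω₂ : Type} [MeasurableSpace Ω₂] (P₂ : Measure Ω₂) [IsProbabilityMeasure P₂]
    (Y : Ω₂ → Fin 2 → ℝ) (hY : Measurable Y)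
    (hlaw : P₂.map Y = P₁.map (fun ω i => X ω (σ ω i)))
    (θ : ℝ) (hθ : θ ∈ Set.Icc (0:ℝ) 1)
    (hsri : ∀ A : Set ℝ, A ⊆ Set.Icc (0:ℝ) 1 → MeasurableSet A → 0 < volume A →
      P₂ ({ω | irank (Y ω) 1 = 2} ∩ {ω | Y ω 0 ∈ A})
        = ENNReal.ofReal θ * P₂ {ω | Y ω 0 ∈ A}) :
    P₂ {ω | fTheta θ (Y ω 1) < fTheta θ (Y ω 0)} = 0 := by
  set ν := P₂.map Y
  have hν : IsProbabilityMeasure ν := Measure.isProbabilityMeasure_map hY.aemeasurable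
  -- `P₁.map` of a non-AE-measurable map is `0`, which `hlaw` rules out.
  have hZ : AEMeasurable (fun ω i => X ω (σ ω i)) P₁ :=
    .of_map_ne_zero (hlaw ▸ IsProbabilityMeasure.ne_zero ν)
  have hsq : ∀ B ⊆ Icc (0:ℝ) 1, MeasurableSet B → ν (univ.pi fun _ => B) = volume B ^ 2 := by
    intro B hB hBm
    rw [hlaw, hX.map_rearrange_univ_pi_const hZ hBm, inter_eq_left.2 hB]
  have hbox : ∀ᵐ y ∂ν, ∀ i, y i ∈ Icc (0:ℝ) 1 := by
    have hpi : univ.pi (fun _ => Icc (0:ℝ) 1) ∈ ae ν :=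
      (mem_ae_iff_prob_eq_one (.univ_pi fun _ => measurableSet_Icc)).2 (by
        rw [hsq _ subset_rfl measurableSet_Icc, Real.volume_Icc]; simp)
    filter_upwards [hpi] with y hy i using hy i (mem_univ i)
  have hsriν : StrongRankIndep ν θ := fun A hA hAm hApos => by
    have h := hsri A hA hAm hApos
    simp only [irank_one_eq_two_iff] at h
    rwa [Measure.map_apply hY (by measurability), Measure.map_apply hY (by measurability)]
  have hle := (ae_map_iff hY.aemeasurable (p := fun y => fTheta θ (y 0) ≤ fTheta θ (y 1))
    (measurableSet_le (by fun_prop) (by fun_prop))).1 (ae_fTheta_fst_le_snd hθ hbox hsq hsriν)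
  simpa only [not_le] using ae_iff.1 hle

/-- The case `n = 2`: if `Y = (Y_1, Y_2)` is a rearrangement of the i.u.d. sequence
`X = (X_1, X_2)` satisfying the strong rank independence condition
`P(R_2 = 2 | Y_1 ∈ A) = θ` for every measurable `A ⊆ [0,1]` of positive measure, then
`Y` is equal in distribution to the travellers' process with parameter `θ`; equivalently
(as stated here) almost surely `f_θ(Y_1) < f_θ(Y_2)`, i.e.
`P(f_θ(Y_2) < f_θ(Y_1)) = 0`. -/
theorem n2_strong_rank_independence_characterizes_travellers
    {Ω₁ : Type} [MeasurableSpace Ω₁] (P₁ : Measure Ω₁) [IsProbabilityMeasure P₁]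
    (X : Ω₁ → Fin 2 → ℝ) (hX : IsIUD P₁ X)
    (σ : Ω₁ → Equiv.Perm (Fin 2))
    (hσ : ∀ s : Equiv.Perm (Fin 2), MeasurableSet {ω | σ ω = s})
    {Ω₂ : Type} [MeasurableSpace Ω₂] (P₂ : Measure Ω₂) [IsProbabilityMeasure P₂]
    (Y : Ω₂ → Fin 2 → ℝ) (hY : Measurable Y)
    (hlaw : P₂.map Y = P₁.map (fun ω i => X ω (σ ω i)))
    (θ : ℝ) (hθ : θ ∈ Set.Icc (0:ℝ) 1)
    (hsri : ∀ A : Set ℝ, A ⊆ Set.Icc (0:ℝ) 1 → MeasurableSet A → 0 < volume A →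
      P₂ ({ω | irank (Y ω) 1 = 2} ∩ {ω | Y ω 0 ∈ A})
        = ENNReal.ofReal θ * P₂ {ω | Y ω 0 ∈ A}) :
    P₂ {ω | fTheta θ (Y ω 1) < fTheta θ (Y ω 0)} = 0 :=
  n2_strong_rank_independence_characterizes_travellers_general P₁ X hX σ P₂ Y hY hlaw θ hθ hsri
end

section
/- Suppose Y =d X↓^μ is a rearrangement of the i.u.d. sequence X = (X_1,...,X_n) such that: the k-th position of Y is fixed, i.e., P(μ_k = ℓ) = 1 for some ℓ, and the initial ranks R_j(Y) for j = k, k+1, ..., n are independent. Then each partial rank R_{k,j}(Y) for j = k,...,n is fixed: it almost surely takes a single value. -/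
open MeasureTheory

/-- The partial rank (0-indexed: `prank y j k` is the paper's
`R_{j+1,k+1}(y) = 1 + #{i ≤ k : y_i > y_j}`, with `1`-based indices). -/
noncomputable def prank {n : ℕ} (y : Fin n → ℝ) (j k : Fin n) : ℕ :=
  1 + (Finset.univ.filter (fun i : Fin n => i ≤ k ∧ y j < y i)).card

/-!
Ties have probability zero, and for a sequence without ties the partial ranks of position `k`
obey `R_{k,j+1} = R_{k,j} + [R_{j+1} ≤ R_{k,j}]`. Hence `R_{k,j}` is a function of the initial
ranks `R_k, …, R_j` and is independent of `R_{j+1}`. The last partial rank `R_{k,n}` is the place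
of `Y_k` in the descending arrangement, which is fixed. Going down from `j = n`: if `g(U, V)` is
a.s. constant, `U` and `V` are independent and `g u` is injective, then every atom `b` of `V`
forces `g(U, b)` to be that constant a.s., so `V` has a single atom.
-/

open Function Finset ProbabilityTheory

lemma card_filter_lt_le_card_filter_lt_iff {ι α : Type*} [LinearOrder α] {s : Finset ι}
    {y : ι → α} {k : ι} (hk : k ∈ s) {z : α} (hz : z ≠ y k) :
    #{i ∈ s | z < y i} ≤ #{i ∈ s | y k < y i} ↔ y k < z := by
  rcases hz.lt_or_gt with h | h
  · refine iff_of_false (not_le.2 (card_lt_card ?_)) h.not_gt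
    refine (ssubset_iff_of_subset (monotone_filter_right s fun _ _ => h.trans)).2 ?_
    exact ⟨k, mem_filter.2 ⟨hk, h⟩, fun hk' => lt_irrefl _ (mem_filter.1 hk').2⟩
  · exact iff_of_true (card_le_card (monotone_filter_right s fun _ _ => h.trans)) h

section Ranks

variable {n : ℕ}

lemma prank_eq_card_Iic (y : Fin n → ℝ) (k j : Fin n) :
    prank y k j = 1 + #{i ∈ Iic j | y k < y i} := by
  rw [prank]; congr 2; ext; simp

lemma irank_eq_card_Iio (y : Fin n → ℝ) (k : Fin n) :
    irank y k = 1 + #{i ∈ Iio k | y k < y i} := by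
  rw [irank]; congr 2; ext; simp

lemma prank_self (y : Fin n → ℝ) (k : Fin n) : prank y k k = irank y k := by
  classical
  rw [prank_eq_card_Iic, irank_eq_card_Iio, ← Iio_insert, filter_insert, if_neg (lt_irrefl _)]

lemma strictAnti_descArr {x : Fin n → ℝ} (hx : Injective x) : StrictAnti (descArr n x) :=
  ((Tuple.monotone_sort x).strictMono_of_injective
    (hx.comp (Tuple.sort x).injective)).comp_strictAnti fun _ _ h => Fin.rev_lt_rev.2 h

lemma prank_comp_perm_of_strictAnti {D : Fin n → ℝ} (hD : StrictAnti D)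
    (s : Equiv.Perm (Fin n)) (k : Fin n) {j : Fin n} (hj : IsTop j) :
    prank (D ∘ s) k j = s k + 1 := by
  have hcard : #{i | i ≤ j ∧ D (s k) < D (s i)} = #(Iio (s k)) :=
    card_equiv s fun i => by simp [hj i, hD.lt_iff_gt]
  rw [prank, ← Fin.card_Iio, ← hcard, add_comm]
  rfl

lemma measurable_card_filter {α ι : Type*} [MeasurableSpace α] (s : Finset ι)
    {p : α → ι → Prop} [∀ a i, Decidable (p a i)] (hp : ∀ i, Measurable fun a => p a i) :
    Measurable fun a => #{i ∈ s | p a i} := by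
  simp only [card_filter]
  exact measurable_sum s fun i _ => Measurable.ite (hp i).setOf measurable_const measurable_const

lemma measurable_prank (k j : Fin n) : Measurable fun y : Fin n → ℝ => prank y k j :=
  measurable_const.add (measurable_card_filter _ fun _ => by fun_prop)

lemma measurable_irank (k : Fin n) : Measurable fun y : Fin n → ℝ => irank y k :=
  measurable_const.add (measurable_card_filter _ fun _ => by fun_prop)

end Ranks

def rankStep (u v : ℕ) : ℕ := v + if u ≤ v then 1 else 0

lemma rankStep_injective (u : ℕ) : Injective (rankStep u) := by
  refine StrictMono.injective (strictMono_nat_of_lt_succ fun v => ?_)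
  unfold rankStep
  split_ifs <;> omega

section RecursionOfPartialRanks

variable {m : ℕ}

lemma prank_succ {y : Fin (m + 1) → ℝ} (hy : Injective y) {k : Fin (m + 1)} {i : Fin m}
    (hk : k ≤ i.castSucc) :
    prank y k i.succ = rankStep (irank y i.succ) (prank y k i.castSucc) := by
  classical
  have hIio : Iio i.succ = Iic i.castSucc := by ext; simp [Fin.le_castSucc_iff]
  have hne : y i.succ ≠ y k := hy.ne (hk.trans_lt Fin.castSucc_lt_succ).ne'
  rw [rankStep, irank_eq_card_Iio, hIio, prank_eq_card_Iic y k i.castSucc]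
  simp only [add_le_add_iff_left, card_filter_lt_le_card_filter_lt_iff (mem_Iic.2 hk) hne]
  rw [prank_eq_card_Iic, ← Iio_insert, hIio, filter_insert]
  split_ifs
  · rw [card_insert_of_notMem (by simp)]
    ring
  · rfl

lemma prank_eq_of_irank_eq {y y' : Fin (m + 1) → ℝ} (hy : Injective y) (hy' : Injective y')
    {k j : Fin (m + 1)} (hkj : k ≤ j) (h : ∀ i, k ≤ i → i ≤ j → irank y i = irank y' i) :
    prank y k j = prank y' k j := by
  induction j using Fin.induction with
  | zero =>
    obtain rfl : k = 0 := nonpos_iff_eq_zero.1 hkj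
    rw [prank_self, prank_self, h 0 le_rfl le_rfl]
  | succ i ih =>
    obtain rfl | hlt := hkj.eq_or_lt
    · rw [prank_self, prank_self, h _ le_rfl le_rfl]
    have hk : k ≤ i.castSucc := Fin.le_castSucc_iff.2 hlt
    rw [prank_succ hy hk, prank_succ hy' hk, h _ hkj le_rfl,
      ih hk fun i' hki' hi' => h i' hki' (hi'.trans Fin.castSucc_lt_succ.le)]

end RecursionOfPartialRanks

section Independence

variable {Ω : Type*} [MeasurableSpace Ω] {P : Measure Ω}

lemma ProbabilityTheory.IndepFun.measure_setOf_eq_eq_zero {β : Type*} [MeasurableSpace β]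
    [MeasurableEq β] [IsFiniteMeasure P] {f g : Ω → β} (hfg : IndepFun f g P)
    (hf : Measurable f) (hg : Measurable g) [NullSingletonClass (P.map g)] :
    P {ω | f ω = g ω} = 0 := by
  have hdiag : {ω | f ω = g ω} = (fun ω => (f ω, g ω)) ⁻¹' Set.diagonal β := rfl
  rw [hdiag, ← Measure.map_apply (hf.prodMk hg) measurableSet_diagonal,
    (indepFun_iff_map_prod_eq_prod_map_map hf.aemeasurable hg.aemeasurable).1 hfg,
    Measure.prod_apply measurableSet_diagonal]
  simp [Set.preimage, Set.diagonal]

lemma ProbabilityTheory.IndepFun.exists_ae_eq_const_of_injective {α β γ : Type*}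
    [IsProbabilityMeasure P] [MeasurableSpace α] [MeasurableSpace β] [Countable β]
    [MeasurableSingletonClass β] [MeasurableSpace γ] [MeasurableSingletonClass γ]
    {U : Ω → α} {V : Ω → β} (hUV : IndepFun U V P) (hV : Measurable V) {g : α → β → γ}
    (hg : ∀ b, Measurable fun u => g u b) (hinj : ∀ u, Injective (g u)) {c : γ}
    (hc : ∀ᵐ ω ∂P, g (U ω) (V ω) = c) : ∃ b, ∀ᵐ ω ∂P, V ω = b := by
  have hatom : ∀ b, P (V ⁻¹' {b}) ≠ 0 → ∀ᵐ ω ∂P, g (U ω) b = c := by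
    intro b hb
    have hnull : P (U ⁻¹' {u | g u b ≠ c} ∩ V ⁻¹' {b}) = 0 :=
      measure_mono_null (fun ω ⟨h1, h2⟩ => by simp_all) (ae_iff.1 hc)
    rw [hUV.measure_inter_preimage_eq_mul {u | g u b ≠ c} {b}
      ((hg b) (measurableSet_singleton c).compl) (measurableSet_singleton b), mul_eq_zero] at hnull
    exact ae_iff.2 (hnull.resolve_right hb)
  have hunique : ∀ b b', P (V ⁻¹' {b}) ≠ 0 → P (V ⁻¹' {b'}) ≠ 0 → b = b' := by
    intro b b' hb hb'
    obtain ⟨ω, h, h'⟩ := ((hatom b hb).and (hatom b' hb')).exists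
    exact hinj (U ω) (h.trans h'.symm)
  obtain ⟨b₀, hb₀⟩ : ∃ b, P (V ⁻¹' {b}) ≠ 0 := by
    by_contra! h
    have hnull := measure_iUnion_null h
    rw [← Set.preimage_iUnion, Set.iUnion_of_singleton, Set.preimage_univ, measure_univ] at hnull
    exact one_ne_zero hnull
  refine ⟨b₀, ae_of_ae_map (p := (· = b₀)) hV.aemeasurable
    (ae_iff_of_countable.2 fun b hb => ?_)⟩
  rw [Measure.map_apply hV (measurableSet_singleton b)] at hb
  exact hunique b b₀ hb hb₀

lemma ProbabilityTheory.iIndepFun.indepFun_of_ae_eq_comp {ι β γ : Type*} [MeasurableSpace β]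
    [MeasurableSpace γ] {f : ι → Ω → β} (hf : iIndepFun f P) (hmeas : ∀ i, Measurable (f i))
    {S : Finset ι} {t : ι} (ht : t ∉ S) {F : (S → β) → γ} (hF : Measurable F) {g : Ω → γ}
    (hg : ∀ᵐ ω ∂P, g ω = F fun i => f i ω) : IndepFun (f t) g P :=
  ((hf.indepFun_finset {t} S (disjoint_singleton_left.2 ht) hmeas).comp
    (measurable_pi_apply ⟨t, mem_singleton_self t⟩) hF).congr (ae_of_all _ fun _ => rfl)
    (hg.mono fun _ h => h.symm)

variable {m : ℕ} {Y : Ω → Fin (m + 1) → ℝ} {k : Fin (m + 1)}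

lemma indepFun_irank_prank (hY : Measurable Y) (hinj : ∀ᵐ ω ∂P, Injective (Y ω))
    (hind : iIndepFun (fun (j : {j // k ≤ j}) ω => irank (Y ω) j.1) P) {i : Fin m}
    (hk : k ≤ i.castSucc) :
    IndepFun (fun ω => irank (Y ω) i.succ) (fun ω => prank (Y ω) k i.castSucc) P := by
  let S : Finset {j // k ≤ j} := {j | j.1 ≤ i.castSucc}
  let e : {y : Fin (m + 1) → ℝ // Injective y} → S → ℕ := fun y j => irank y.1 j.1.1
  let g : {y : Fin (m + 1) → ℝ // Injective y} → ℕ := fun y => prank y.1 k i.castSucc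
  have hfac : FactorsThrough g e := fun y y' hyy' =>
    prank_eq_of_irank_eq y.2 y'.2 hk fun j hkj hj => congrFun hyy' ⟨⟨j, hkj⟩, by simpa [S] using hj⟩
  refine hind.indepFun_of_ae_eq_comp (fun j => (measurable_irank j.1).comp hY)
    (t := ⟨i.succ, hk.trans Fin.castSucc_lt_succ.le⟩) (by simp [S])
    (measurable_of_countable (extend e g 0)) ?_
  filter_upwards [hinj] with ω hω
  exact (hfac.extend_apply 0 ⟨Y ω, hω⟩).symm

lemma exists_ae_prank_eq_of_iIndepFun [IsProbabilityMeasure P] (hY : Measurable Y)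
    (hinj : ∀ᵐ ω ∂P, Injective (Y ω))
    (hind : iIndepFun (fun (j : {j // k ≤ j}) ω => irank (Y ω) j.1) P) {r₀ : ℕ}
    (hlast : ∀ᵐ ω ∂P, prank (Y ω) k (Fin.last m) = r₀) :
    ∀ j, k ≤ j → ∃ r : ℕ, ∀ᵐ ω ∂P, prank (Y ω) k j = r := by
  intro j
  induction j using Fin.reverseInduction with
  | last => exact fun _ => ⟨r₀, hlast⟩
  | cast i ih =>
    intro hk
    obtain ⟨r, hr⟩ := ih (hk.trans Fin.castSucc_lt_succ.le)
    refine (indepFun_irank_prank hY hinj hind hk).exists_ae_eq_const_of_injective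
      ((measurable_prank k _).comp hY) (fun _ => measurable_of_countable _) rankStep_injective
      (c := r) ?_
    filter_upwards [hinj, hr] with ω hω hrω
    rw [← prank_succ hω hk, hrω]

end Independence

lemma IsIUD.ae_injective {Ω : Type} [MeasurableSpace Ω] {P : Measure Ω} {n : ℕ}
    {X : Ω → Fin n → ℝ} (hX : IsIUD P X) : ∀ᵐ ω ∂P, Injective (X ω) := by
  obtain ⟨hmeas, hindep, hunif⟩ := hX
  have := hindep.isProbabilityMeasure
  have hpair : ∀ i j, ∀ᵐ ω ∂P, X ω i = X ω j → i = j := by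
    intro i j
    by_cases hij : i = j
    · exact ae_of_all _ fun _ _ => hij
    have : NullSingletonClass (P.map fun ω => X ω j) := by rw [hunif j]; infer_instance
    refine (measure_eq_zero_iff_ae_notMem.1 ?_).mono fun ω h he => (h he).elim
    exact (hindep.indepFun hij).measure_setOf_eq_eq_zero (hmeas i) (hmeas j)
  filter_upwards [ae_all_iff.2 fun i => ae_all_iff.2 (hpair i)] with ω h a b using h a b

theorem fixed_position_partial_ranks_fixed_general {n : ℕ}
    {Ω₁ : Type} [MeasurableSpace Ω₁] (P₁ : Measure Ω₁)
    (X : Ω₁ → Fin n → ℝ) (hX : IsIUD P₁ X)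
    (μ : Ω₁ → Equiv.Perm (Fin n))
    {Ω₂ : Type} [MeasurableSpace Ω₂] (P₂ : Measure Ω₂) [IsProbabilityMeasure P₂]
    (Y : Ω₂ → Fin n → ℝ) (hY : Measurable Y)
    (hlaw : P₂.map Y = P₁.map (fun ω i => descArr n (X ω) (μ ω i)))
    (k : Fin n) (ℓ : Fin n) (hfix : P₁ {ω | μ ω k = ℓ} = 1)
    (hind : ProbabilityTheory.iIndepFun
      (fun (j : {j : Fin n // k ≤ j}) ω => irank (Y ω) j.1) P₂) :
    ∀ j : Fin n, k ≤ j → ∃ r : ℕ, P₂ {ω | prank (Y ω) k j = r} = 1 := by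
  obtain ⟨m, rfl⟩ : ∃ m, n = m + 1 := Nat.exists_eq_succ_of_ne_zero k.pos.ne'
  set Z : Ω₁ → Fin (m + 1) → ℝ := fun ω i => descArr (m + 1) (X ω) (μ ω i)
  have hZ : AEMeasurable Z P₁ :=
    .of_map_ne_zero (hlaw ▸ (Measure.isProbabilityMeasure_map hY.aemeasurable).ne_zero)
  set G : Set (Fin (m + 1) → ℝ) := {y | Injective y ∧ prank y k (Fin.last m) = ℓ + 1}
  have hG : MeasurableSet G :=
    (show MeasurableSet {y : Fin (m + 1) → ℝ | Injective y} by
      simp only [measurableSet_setOfPred, Injective]; fun_prop).inter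
      (measurable_prank k _ (measurableSet_singleton _))
  have hZG : {ω | μ ω k = ℓ} ∩ {ω | Injective (X ω)} ⊆ Z ⁻¹' G := fun ω ⟨hμk, hXω⟩ =>
    ⟨(strictAnti_descArr hXω).injective.comp (μ ω).injective,
      hμk ▸ prank_comp_perm_of_strictAnti (strictAnti_descArr hXω) (μ ω) k Fin.le_last⟩
  have hYG : ∀ᵐ ω ∂P₂, Y ω ∈ G := by
    refine (prob_compl_eq_zero_iff (hY hG)).2 (le_antisymm prob_le_one ?_)
    rw [← Measure.map_apply hY hG, hlaw, Measure.map_apply_of_aemeasurable hZ hG, ← hfix,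
      ← measure_inter_conull (ae_iff.1 hX.ae_injective)]
    exact measure_mono hZG
  intro j hkj
  obtain ⟨r, hr⟩ := exists_ae_prank_eq_of_iIndepFun hY (hYG.mono fun _ h => h.1) hind
    (hYG.mono fun _ h => h.2) j hkj
  exact ⟨r, (prob_compl_eq_zero_iff
    ((measurable_prank k j).comp hY (measurableSet_singleton r))).1 hr⟩

/-- Suppose `Y =d X↓^μ` is a rearrangement of the i.u.d. sequence `X` such that the
`k`-th position of `Y` is fixed (`P(μ_k = ℓ) = 1` for some `ℓ`) and the initial ranks
`R_j(Y)`, `j = k,...,n`, are independent.  Then each partial rank `R_{k,j}(Y)`,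
`j = k,...,n`, is fixed: it almost surely takes a single value. -/
theorem fixed_position_partial_ranks_fixed {n : ℕ}
    {Ω₁ : Type} [MeasurableSpace Ω₁] (P₁ : Measure Ω₁) [IsProbabilityMeasure P₁]
    (X : Ω₁ → Fin n → ℝ) (hX : IsIUD P₁ X)
    (μ : Ω₁ → Equiv.Perm (Fin n))
    (hμmeas : ∀ s : Equiv.Perm (Fin n), MeasurableSet {ω | μ ω = s})
    {Ω₂ : Type} [MeasurableSpace Ω₂] (P₂ : Measure Ω₂) [IsProbabilityMeasure P₂]
    (Y : Ω₂ → Fin n → ℝ) (hY : Measurable Y)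
    (hlaw : P₂.map Y = P₁.map (fun ω i => descArr n (X ω) (μ ω i)))
    (k : Fin n) (ℓ : Fin n) (hfix : P₁ {ω | μ ω k = ℓ} = 1)
    (hind : ProbabilityTheory.iIndepFun
      (fun (j : {j : Fin n // k ≤ j}) ω => irank (Y ω) j.1) P₂) :
    ∀ j : Fin n, k ≤ j → ∃ r : ℕ, P₂ {ω | prank (Y ω) k j = r} = 1 :=
  fixed_position_partial_ranks_fixed_general P₁ X hX μ P₂ Y hY hlaw k ℓ hfix hind
end

section
/- Let n ≥ 3 and let 𝔲 : Δ_n → S_n be a binary map, i.e., there is a measurable set F ⊂ I² such that for almost every a = (a_1,...,a_n) ∈ Δ_n and all i ≠ j, 𝔲(a)_i < 𝔲(a)_j if and only if (a_i, a_j) ∈ F. Then the relation u ≺ v :⟺ (u,v) ∈ F is an almost total ordering of I: the set of pairs (u,v) ∈ I² for which neither u ≺ v nor v ≺ u holds is Lebesgue-null, the set of pairs for which both hold is Lebesgue-null, and for almost every triple (u,v,w) ∈ I³ with u ≺ v and v ≺ w one also has u ≺ w. -/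
/-!
For almost every `a ∈ Δ_n` the relation `F` on the coordinates of `a` is the strict total
order pulled back along the permutation `𝔲 a`, so `(a_i, a_j)` and `(a_i, a_j, a_k)` avoid every
pattern violating completeness, antisymmetry or transitivity whenever the indices are distinct.
This transfers from `Δ_n` to the unit cube: by Fubini in the last coordinate, the fibre of
`Δ_{n+1}` over a point of `Δ_n` with positive coordinates contains an interval `(0, ε)` and so is
not null; and off the coordinate hyperplanes every point of `[0,1]^m` is a permutation of such a
point of `Δ_m`.
-/

open MeasureTheory

/-- `Δ_n`, the simplex of descending `n`-tuples in `[0,1]^n`. -/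
def simplexSet (n : ℕ) : Set (Fin n → ℝ) :=
  {a | (∀ i, a i ∈ Set.Icc (0:ℝ) 1) ∧ ∀ i j : Fin n, i ≤ j → a j ≤ a i}

open Filter Set Topology

lemma mem_simplexSet_iff {n : ℕ} {a : Fin n → ℝ} :
    a ∈ simplexSet n ↔ (∀ i, a i ∈ Icc (0 : ℝ) 1) ∧ Antitone a :=
  Iff.rfl

lemma snoc_mem_simplexSet {n : ℕ} {y : Fin n → ℝ} {t : ℝ} (hy : y ∈ simplexSet n)
    (ht₀ : 0 ≤ t) (ht₁ : t ≤ 1) (hty : ∀ i, t ≤ y i) :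
    (Fin.snoc y t : Fin (n + 1) → ℝ) ∈ simplexSet (n + 1) := by
  rw [mem_simplexSet_iff] at hy ⊢
  refine ⟨fun i => ?_, fun i j hij => ?_⟩
  · induction i using Fin.lastCases <;> simp [*]
  · induction j using Fin.lastCases with
    | last => induction i using Fin.lastCases <;> simp [hty]
    | cast j =>
      induction i using Fin.lastCases with
      | last => exact absurd hij (not_le.2 (Fin.castSucc_lt_last j))
      | cast i => simpa using hy.2 (Fin.castSucc_le_castSucc_iff.1 hij)

lemma eventually_snoc_mem_simplexSet {n : ℕ} {y : Fin n → ℝ} (hy : y ∈ simplexSet n)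
    (hpos : ∀ i, 0 < y i) :
    ∀ᶠ t in 𝓝[>] 0, (Fin.snoc y t : Fin (n + 1) → ℝ) ∈ simplexSet (n + 1) ∧
      ∀ i, 0 < (Fin.snoc y t : Fin (n + 1) → ℝ) i := by
  have hsmall : ∀ᶠ t in 𝓝[>] (0 : ℝ), t ≤ 1 ∧ ∀ i, t ≤ y i :=
    nhdsWithin_le_nhds ((eventually_le_nhds zero_lt_one).and
      (eventually_all.2 fun i => eventually_le_nhds (hpos i)))
  filter_upwards [hsmall, self_mem_nhdsWithin] with t ⟨ht₁, hty⟩ (ht₀ : 0 < t)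
  refine ⟨snoc_mem_simplexSet hy ht₀.le ht₁ hty, fun i => ?_⟩
  induction i using Fin.lastCases <;> simp [ht₀, hpos]

theorem ae_simplexSet_of_ae_simplexSet_succ {n : ℕ} {P : (Fin n → ℝ) → Prop}
    (h : ∀ᵐ a : Fin (n + 1) → ℝ, a ∈ simplexSet (n + 1) → (∀ i, 0 < a i) →
      P (Fin.init a)) :
    ∀ᵐ y : Fin n → ℝ, y ∈ simplexSet n → (∀ i, 0 < y i) → P y := by
  have hfib : ∀ᵐ y : Fin n → ℝ, ∀ᵐ t : ℝ,
      (Fin.snoc y t : Fin (n + 1) → ℝ) ∈ simplexSet (n + 1) →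
      (∀ i, 0 < (Fin.snoc y t : Fin (n + 1) → ℝ) i) → P y := by
    have hsplit := (volume_preserving_piFinSuccAbove (fun _ : Fin (n + 1) => ℝ)
      (Fin.last n)).symm.quasiMeasurePreserving.ae h
    have hswap := Measure.measurePreserving_swap.quasiMeasurePreserving.ae hsplit
    simpa [Fin.snocEquiv, Fin.init_snoc] using Measure.ae_ae_of_ae_prod hswap
  filter_upwards [hfib] with y hy hΔ hpos
  by_contra hP
  obtain ⟨u, hu, hsub⟩ :=
    mem_nhdsGT_iff_exists_Ioo_subset.1 (eventually_snoc_mem_simplexSet hΔ hpos)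
  have hnull : volume (Ioo 0 u) = 0 :=
    measure_mono_null hsub (measure_eq_zero_iff_ae_notMem.2 (hy.mono fun t ht h => hP (ht h.1 h.2)))
  simp only [Real.volume_Ioo, sub_zero, ENNReal.ofReal_eq_zero] at hnull
  exact not_le.2 hu hnull

theorem ae_simplexSet_of_ae_simplexSet_castLE {m n : ℕ} (hmn : m ≤ n)
    {P : (Fin m → ℝ) → Prop}
    (h : ∀ᵐ a : Fin n → ℝ, a ∈ simplexSet n → (∀ i, 0 < a i) →
      P (a ∘ Fin.castLE hmn)) :
    ∀ᵐ y : Fin m → ℝ, y ∈ simplexSet m → (∀ i, 0 < y i) → P y := by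
  induction n, hmn using Nat.le_induction with
  | base => simpa using h
  | succ n hmn ih => exact ih (ae_simplexSet_of_ae_simplexSet_succ h)

theorem volume_measurePreserving_comp_perm {ι α : Type*} [Fintype ι] [MeasureSpace α]
    [SigmaFinite (volume : Measure α)] (σ : Equiv.Perm ι) :
    MeasurePreserving (fun x : ι → α => x ∘ σ) := by
  have hσ : (fun x : ι → α => x ∘ σ) =
      MeasurableEquiv.piCongrLeft (fun _ => α) σ.symm := by
    funext x i
    simp [MeasurableEquiv.coe_piCongrLeft, Equiv.piCongrLeft_apply_eq_cast]
  rw [hσ]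
  exact volume_measurePreserving_piCongrLeft _ _

theorem ae_unitCube_of_ae_simplexSet {m n : ℕ} (hmn : m ≤ n) {P : (Fin m → ℝ) → Prop}
    (h : ∀ᵐ a : Fin n → ℝ, a ∈ simplexSet n → ∀ ι : Fin m ↪ Fin n, P (a ∘ ι)) :
    ∀ᵐ x : Fin m → ℝ, (∀ i, x i ∈ Icc (0 : ℝ) 1) → P x := by
  have hsorted : ∀ᵐ y : Fin m → ℝ, y ∈ simplexSet m → (∀ i, 0 < y i) →
      ∀ σ : Equiv.Perm (Fin m), P (y ∘ σ) :=
    ae_simplexSet_of_ae_simplexSet_castLE hmn <| h.mono fun a ha hΔ _ σ =>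
      ha hΔ (σ.toEmbedding.trans (Fin.castLEEmb hmn))
  have hperm : ∀ᵐ x : Fin m → ℝ, ∀ σ : Equiv.Perm (Fin m), x ∘ σ ∈ simplexSet m →
      (∀ i, 0 < x (σ i)) → P (x ∘ σ ∘ σ.symm) :=
    ae_all_iff.2 fun σ => (volume_measurePreserving_comp_perm σ).quasiMeasurePreserving.ae
      (hsorted.mono fun y hy hΔ hpos => hy hΔ hpos σ.symm)
  have hne : ∀ᵐ x : Fin m → ℝ, ∀ i, x i ≠ 0 :=
    ae_all_iff.2 fun i => Measure.ae_eval_ne _ i 0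
  filter_upwards [hperm, hne] with x hx hx₀ hcube
  set σ := Tuple.sort (-x)
  have hanti : Antitone (x ∘ σ) := fun i j hij => neg_le_neg_iff.1 (Tuple.monotone_sort (-x) hij)
  simpa [Function.comp_assoc] using
    hx σ ⟨fun i => hcube (σ i), hanti⟩ fun i => (hcube (σ i)).1.lt_of_ne' (hx₀ (σ i))

theorem volume_measurePreserving_vecThree {α : Type*} [MeasureSpace α]
    [SigmaFinite (volume : Measure α)] :
    MeasurePreserving (fun q : α × α × α => ![q.1, q.2.1, q.2.2]) := by
  let e : (Fin 3 → α) ≃ᵐ α × α × α :=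
    (MeasurableEquiv.piFinSuccAbove (fun _ => α) 0).trans
      ((MeasurableEquiv.refl α).prodCongr MeasurableEquiv.finTwoArrow)
  have he : MeasurePreserving e := ((MeasurePreserving.id volume).prod
    (volume_preserving_finTwoArrow α)).comp (volume_preserving_piFinSuccAbove _ 0)
  convert he.symm e using 1
  funext q i
  fin_cases i <;> rfl

theorem volume_unitSquare_inter_eq_zero_of_ae_simplexSet {n : ℕ} (hn : 2 ≤ n)
    {B : Set (ℝ × ℝ)}
    (h : ∀ᵐ a : Fin n → ℝ, a ∈ simplexSet n → ∀ i j, i ≠ j → (a i, a j) ∉ B) :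
    volume {p : ℝ × ℝ | p.1 ∈ Icc (0 : ℝ) 1 ∧ p.2 ∈ Icc (0 : ℝ) 1 ∧ p ∈ B} = 0 := by
  have hcube := ae_unitCube_of_ae_simplexSet hn (P := fun x => (x 0, x 1) ∉ B) <|
    h.mono fun a ha hΔ ι => ha hΔ _ _ (ι.injective.ne (by decide))
  refine measure_eq_zero_iff_ae_notMem.2 ?_
  filter_upwards [(volume_preserving_finTwoArrow ℝ).symm.quasiMeasurePreserving.ae hcube]
    with p hp ⟨hp₁, hp₂, hpB⟩
  exact hp (by simpa [Fin.forall_fin_two] using And.intro hp₁ hp₂) (by simpa using hpB)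

theorem volume_unitCube_inter_eq_zero_of_ae_simplexSet {n : ℕ} (hn : 3 ≤ n)
    {B : Set (ℝ × ℝ × ℝ)}
    (h : ∀ᵐ a : Fin n → ℝ, a ∈ simplexSet n →
      ∀ i j k, i ≠ j → j ≠ k → i ≠ k → (a i, a j, a k) ∉ B) :
    volume {q : ℝ × ℝ × ℝ | q.1 ∈ Icc (0 : ℝ) 1 ∧ q.2.1 ∈ Icc (0 : ℝ) 1 ∧
      q.2.2 ∈ Icc (0 : ℝ) 1 ∧ q ∈ B} = 0 := by
  have hcube := ae_unitCube_of_ae_simplexSet hn (P := fun x => (x 0, x 1, x 2) ∉ B) <|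
    h.mono fun a ha hΔ ι => ha hΔ _ _ _ (ι.injective.ne (by decide))
      (ι.injective.ne (by decide)) (ι.injective.ne (by decide))
  refine measure_eq_zero_iff_ae_notMem.2 ?_
  filter_upwards [volume_measurePreserving_vecThree.quasiMeasurePreserving.ae hcube]
    with q hq ⟨hq₁, hq₂, hq₃, hqB⟩
  exact hq (by simpa [Fin.forall_fin_succ] using And.intro hq₁ (And.intro hq₂ hq₃))
    (by simpa using hqB)

theorem binary_map_gives_almost_total_order_general {n : ℕ} (hn : 3 ≤ n)
    (𝔲 : (Fin n → ℝ) → Equiv.Perm (Fin n)) (F : Set (ℝ × ℝ))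
    (hbin : ∀ᵐ a ∂(volume : Measure (Fin n → ℝ)), a ∈ simplexSet n →
      ∀ i j : Fin n, i ≠ j → ((𝔲 a) i < (𝔲 a) j ↔ (a i, a j) ∈ F)) :
    volume {p : ℝ × ℝ | p.1 ∈ Set.Icc (0:ℝ) 1 ∧ p.2 ∈ Set.Icc (0:ℝ) 1 ∧
        p ∉ F ∧ (p.2, p.1) ∉ F} = 0 ∧
    volume {p : ℝ × ℝ | p.1 ∈ Set.Icc (0:ℝ) 1 ∧ p.2 ∈ Set.Icc (0:ℝ) 1 ∧
        p ∈ F ∧ (p.2, p.1) ∈ F} = 0 ∧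
    volume {q : ℝ × ℝ × ℝ | q.1 ∈ Set.Icc (0:ℝ) 1 ∧ q.2.1 ∈ Set.Icc (0:ℝ) 1 ∧
        q.2.2 ∈ Set.Icc (0:ℝ) 1 ∧
        (q.1, q.2.1) ∈ F ∧ (q.2.1, q.2.2) ∈ F ∧ (q.1, q.2.2) ∉ F} = 0 := by
  refine ⟨?_, ?_, ?_⟩
  · apply volume_unitSquare_inter_eq_zero_of_ae_simplexSet (by omega : 2 ≤ n)
    filter_upwards [hbin] with a ha hΔ i j hij ⟨hFij, hFji⟩
    rcases lt_or_gt_of_ne ((𝔲 a).injective.ne hij) with hlt | hlt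
    · exact hFij ((ha hΔ i j hij).1 hlt)
    · exact hFji ((ha hΔ j i hij.symm).1 hlt)
  · apply volume_unitSquare_inter_eq_zero_of_ae_simplexSet (by omega : 2 ≤ n)
    filter_upwards [hbin] with a ha hΔ i j hij ⟨hFij, hFji⟩
    exact lt_asymm ((ha hΔ i j hij).2 hFij) ((ha hΔ j i hij.symm).2 hFji)
  · apply volume_unitCube_inter_eq_zero_of_ae_simplexSet hn
    filter_upwards [hbin] with a ha hΔ i j k hij hjk hik ⟨hFij, hFjk, hFik⟩
    exact hFik ((ha hΔ i k hik).1 (((ha hΔ i j hij).2 hFij).trans ((ha hΔ j k hjk).2 hFjk)))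

/-- Let `n ≥ 3` and let `𝔲 : Δ_n → S_n` be a binary map: there is a measurable
`F ⊆ I²` such that for a.e. `a ∈ Δ_n` and all `i ≠ j`, `𝔲(a)_i < 𝔲(a)_j` iff
`(a_i, a_j) ∈ F`.  Then `u ≺ v :⟺ (u,v) ∈ F` is an almost total ordering of
`I = [0,1]`: completeness, antisymmetry and transitivity hold up to null sets. -/
theorem binary_map_gives_almost_total_order {n : ℕ} (hn : 3 ≤ n)
    (𝔲 : (Fin n → ℝ) → Equiv.Perm (Fin n)) (F : Set (ℝ × ℝ))
    (hF : MeasurableSet F)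
    (hbin : ∀ᵐ a ∂(volume : Measure (Fin n → ℝ)), a ∈ simplexSet n →
      ∀ i j : Fin n, i ≠ j → ((𝔲 a) i < (𝔲 a) j ↔ (a i, a j) ∈ F)) :
    volume {p : ℝ × ℝ | p.1 ∈ Set.Icc (0:ℝ) 1 ∧ p.2 ∈ Set.Icc (0:ℝ) 1 ∧
        p ∉ F ∧ (p.2, p.1) ∉ F} = 0 ∧
    volume {p : ℝ × ℝ | p.1 ∈ Set.Icc (0:ℝ) 1 ∧ p.2 ∈ Set.Icc (0:ℝ) 1 ∧
        p ∈ F ∧ (p.2, p.1) ∈ F} = 0 ∧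
    volume {q : ℝ × ℝ × ℝ | q.1 ∈ Set.Icc (0:ℝ) 1 ∧ q.2.1 ∈ Set.Icc (0:ℝ) 1 ∧
        q.2.2 ∈ Set.Icc (0:ℝ) 1 ∧
        (q.1, q.2.1) ∈ F ∧ (q.2.1, q.2.2) ∈ F ∧ (q.1, q.2.2) ∉ F} = 0 :=
  binary_map_gives_almost_total_order_general hn 𝔲 F hbin
end

section
/- Let ≺ be an almost total ordering of I which is measurable as a subset of I², and define f(u) := Leb({v ∈ I : v ≺ u}). Then for every t ∈ [0,1] the level set C_t := {u ∈ I : f(u) = t} has Lebesgue measure zero. -/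
open MeasureTheory

/-- `R` (as a binary relation `u ≺ v ⟺ (u,v) ∈ R`) is an almost total ordering of
`I = [0,1]`: completeness, antisymmetry and (pairwise/triplewise) transitivity hold
outside null sets. -/
def IsAlmostTotalOrder (R : Set (ℝ × ℝ)) : Prop :=
  volume {p : ℝ × ℝ | p.1 ∈ Set.Icc (0:ℝ) 1 ∧ p.2 ∈ Set.Icc (0:ℝ) 1 ∧
      p ∉ R ∧ (p.2, p.1) ∉ R} = 0 ∧
  volume {p : ℝ × ℝ | p.1 ∈ Set.Icc (0:ℝ) 1 ∧ p.2 ∈ Set.Icc (0:ℝ) 1 ∧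
      p ∈ R ∧ (p.2, p.1) ∈ R} = 0 ∧
  volume {q : ℝ × ℝ × ℝ | q.1 ∈ Set.Icc (0:ℝ) 1 ∧ q.2.1 ∈ Set.Icc (0:ℝ) 1 ∧
      q.2.2 ∈ Set.Icc (0:ℝ) 1 ∧
      (q.1, q.2.1) ∈ R ∧ (q.2.1, q.2.2) ∈ R ∧ (q.1, q.2.2) ∉ R} = 0

/-- `f(u) = Leb({v ∈ I : v ≺ u})`, the measure of the lower section at `u`. -/
noncomputable def ordf (R : Set (ℝ × ℝ)) (u : ℝ) : ℝ :=
  (volume {v : ℝ | v ∈ Set.Icc (0:ℝ) 1 ∧ (v, u) ∈ R}).toReal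

/-!
Suppose the level set `C` of `f` at `t` is not null. By transitivity, `u ≺ w` makes the lower
section of `u` almost contained in that of `w`; both sections have measure `t`, so they agree up
to a null set, and by completeness this happens for almost every pair in `C × C`. Hence a generic
`u₀ ∈ C` has a lower section `Λ` such that, for almost every pair `(a, w) ∈ C × C`, `a ≺ w` iff
`a ∈ Λ`. Completeness and antisymmetry then say that exactly one of `a`, `w` lies in `Λ`, so
`(C ∩ Λ)²` and `(C \ Λ)²` are null, and so is `C`.
-/

namespace MeasureTheory

variable {α : Type*} [MeasurableSpace α] {μ : Measure α}

theorem measure_eq_zero_of_ae_mem_iff_notMem [SFinite μ] {C Λ : Set α}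
    (h : ∀ᵐ p ∂μ.prod μ, p.1 ∈ C → p.2 ∈ C → (p.1 ∈ Λ ↔ p.2 ∉ Λ)) : μ C = 0 := by
  have hbad : μ.prod μ {p | ¬(p.1 ∈ C → p.2 ∈ C → (p.1 ∈ Λ ↔ p.2 ∉ Λ))} = 0 := ae_iff.mp h
  have square_null : ∀ s ⊆ C, (∀ a ∈ s, ∀ b ∈ s, (a ∈ Λ ↔ b ∈ Λ)) → μ s = 0 := by
    intro s hsC hs
    have : μ.prod μ (s ×ˢ s) = 0 := by
      refine measure_mono_null ?_ hbad
      rintro p ⟨h1, h2⟩ hp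
      exact iff_not_self ((hp (hsC h1) (hsC h2)).trans (not_congr (hs _ h1 _ h2)).symm)
    rwa [Measure.prod_prod, mul_self_eq_zero] at this
  rw [← Set.inter_union_sdiff C Λ]
  refine measure_union_null (square_null _ Set.inter_subset_left ?_)
    (square_null _ Set.sdiff_subset ?_)
  · exact fun a ha b hb => iff_of_true ha.2 hb.2
  · exact fun a ha b hb => iff_of_false ha.2 hb.2

def lowerSection (R : Set (α × α)) (u : α) : Set α := {v | (v, u) ∈ R}

variable {R : Set (α × α)}

theorem measurableSet_lowerSection (hR : MeasurableSet R) (u : α) :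
    MeasurableSet (lowerSection R u) :=
  measurable_prodMk_right hR

theorem measurable_measure_lowerSection [SFinite μ] (hR : MeasurableSet R) :
    Measurable fun u => μ (lowerSection R u) :=
  measurable_measure_prodMk_right hR

theorem ae_lowerSection_ae_le [SFinite μ] (hR : MeasurableSet R)
    (htrans : ∀ᵐ q ∂μ.prod (μ.prod μ),
      (q.1, q.2.1) ∈ R → (q.2.1, q.2.2) ∈ R → (q.1, q.2.2) ∈ R) :
    ∀ᵐ p ∂μ.prod μ, p ∈ R → lowerSection R p.1 ≤ᵐ[μ] lowerSection R p.2 := by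
  have hmeas : MeasurableSet {q : α × α × α |
      (q.1, q.2.1) ∈ R → (q.2.1, q.2.2) ∈ R → (q.1, q.2.2) ∈ R} := by
    have hRmem := hR.mem
    exact Measurable.setOf (by fun_prop)
  have := (Measure.ae_ae_comm hmeas).mp ((Measure.ae_prod_iff_ae_ae hmeas).mp htrans)
  filter_upwards [this] with p hp hpR
  exact hp.mono fun a ha hau => ha hau hpR

theorem ae_lowerSection_ae_eq_of_measure_eq [IsFiniteMeasure μ] (hR : MeasurableSet R)
    (hcomp : ∀ᵐ p ∂μ.prod μ, p ∈ R ∨ p.swap ∈ R)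
    (htrans : ∀ᵐ q ∂μ.prod (μ.prod μ),
      (q.1, q.2.1) ∈ R → (q.2.1, q.2.2) ∈ R → (q.1, q.2.2) ∈ R) :
    ∀ᵐ p ∂μ.prod μ, μ (lowerSection R p.1) = μ (lowerSection R p.2) →
      lowerSection R p.1 =ᵐ[μ] lowerSection R p.2 := by
  have hle := ae_lowerSection_ae_le hR htrans
  have hle_swap := Measure.measurePreserving_swap.quasiMeasurePreserving.ae hle
  filter_upwards [hcomp, hle, hle_swap] with p hp hle hle_swap hμ
  rcases hp with hp | hp
  · exact ae_eq_of_ae_subset_of_measure_ge (hle hp) hμ.ge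
      (measurableSet_lowerSection hR _).nullMeasurableSet (measure_ne_top _ _)
  · exact (ae_eq_of_ae_subset_of_measure_ge (hle_swap hp) hμ.le
      (measurableSet_lowerSection hR _).nullMeasurableSet (measure_ne_top _ _)).symm

theorem measure_setOf_measure_lowerSection_eq_eq_zero [IsFiniteMeasure μ] (hR : MeasurableSet R)
    (hcomp : ∀ᵐ p ∂μ.prod μ, p ∈ R ∨ p.swap ∈ R)
    (hanti : ∀ᵐ p ∂μ.prod μ, ¬(p ∈ R ∧ p.swap ∈ R))
    (htrans : ∀ᵐ q ∂μ.prod (μ.prod μ),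
      (q.1, q.2.1) ∈ R → (q.2.1, q.2.2) ∈ R → (q.1, q.2.2) ∈ R) (c : ENNReal) :
    μ {u | μ (lowerSection R u) = c} = 0 := by
  set C := {u | μ (lowerSection R u) = c}
  have hC : MeasurableSet C := measurable_measure_lowerSection hR (measurableSet_singleton c)
  by_contra hC0
  obtain ⟨u₀, -, hu₀⟩ : ∃ u₀ ∈ C, ∀ᵐ w ∂μ, w ∈ C →
      lowerSection R u₀ =ᵐ[μ] lowerSection R w := by
    have := Measure.ae_ae_of_ae_prod (ae_lowerSection_ae_eq_of_measure_eq hR hcomp htrans)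
    obtain ⟨u, huC, hu⟩ := Measure.exists_mem_of_measure_ne_zero_of_ae hC0 (ae_restrict_of_ae this)
    exact ⟨u, huC, hu.mono fun w hw hwC => hw (huC.trans hwC.symm)⟩
  set Λ := lowerSection R u₀
  have hmem_iff : ∀ᵐ p ∂μ.prod μ, p.2 ∈ C → (p ∈ R ↔ p.1 ∈ Λ) := by
    have hmeas : MeasurableSet {p : α × α | p.2 ∈ C → (p ∈ R ↔ p.1 ∈ Λ)} := by
      have := hR.mem
      have := hC.mem
      have := (measurableSet_lowerSection hR u₀).mem
      exact Measurable.setOf (by fun_prop)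
    rw [Measure.ae_prod_iff_ae_ae hmeas, Measure.ae_ae_comm hmeas]
    filter_upwards [hu₀] with w hw
    rw [Filter.eventually_imp_distrib_left]
    exact fun hwC => (hw hwC).mono fun a ha => ha.symm.to_iff
  have hmem_iff_swap := Measure.measurePreserving_swap.quasiMeasurePreserving.ae hmem_iff
  refine hC0 (measure_eq_zero_of_ae_mem_iff_notMem (Λ := Λ) ?_)
  filter_upwards [hmem_iff, hmem_iff_swap, hcomp, hanti] with p h1 h2 h3 h4 hp1 hp2
  simp only [Prod.fst_swap, Prod.snd_swap] at h2
  tauto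

end MeasureTheory

local notation "I" => Set.Icc (0 : ℝ) 1

namespace IsAlmostTotalOrder

variable {R : Set (ℝ × ℝ)}

theorem ae_total (h : IsAlmostTotalOrder R) :
    ∀ᵐ p ∂(volume.restrict I).prod (volume.restrict I), p ∈ R ∨ p.swap ∈ R := by
  rw [Measure.prod_restrict, ae_restrict_iff' (measurableSet_Icc.prod measurableSet_Icc)]
  refine ae_iff.2 (measure_mono_null (fun p hp => ?_) h.1)
  simp only [Set.mem_ofPred_eq, Set.mem_prod, Classical.not_imp, not_or] at hp
  exact ⟨hp.1.1, hp.1.2, hp.2⟩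

theorem ae_antisymm (h : IsAlmostTotalOrder R) :
    ∀ᵐ p ∂(volume.restrict I).prod (volume.restrict I), ¬(p ∈ R ∧ p.swap ∈ R) := by
  rw [Measure.prod_restrict, ae_restrict_iff' (measurableSet_Icc.prod measurableSet_Icc)]
  refine ae_iff.2 (measure_mono_null (fun p hp => ?_) h.2.1)
  simp only [Set.mem_ofPred_eq, Set.mem_prod, Classical.not_imp, not_not] at hp
  exact ⟨hp.1.1, hp.1.2, hp.2⟩

theorem ae_trans (h : IsAlmostTotalOrder R) :
    ∀ᵐ q ∂(volume.restrict I).prod ((volume.restrict I).prod (volume.restrict I)),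
      (q.1, q.2.1) ∈ R → (q.2.1, q.2.2) ∈ R → (q.1, q.2.2) ∈ R := by
  rw [Measure.prod_restrict, Measure.prod_restrict,
    ae_restrict_iff' (measurableSet_Icc.prod (measurableSet_Icc.prod measurableSet_Icc))]
  refine ae_iff.2 (measure_mono_null (fun q hq => ?_) h.2.2)
  simp only [Set.mem_ofPred_eq, Set.mem_prod, Classical.not_imp] at hq
  exact ⟨hq.1.1, hq.1.2.1, hq.1.2.2, hq.2⟩

end IsAlmostTotalOrder

/-- For a measurable almost total ordering `≺` of `I` and
`f(u) := Leb({v ∈ I : v ≺ u})`, every level set `C_t = {u ∈ I : f(u) = t}`,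
`t ∈ [0,1]`, has Lebesgue measure zero. -/
theorem level_sets_null (R : Set (ℝ × ℝ)) (hR : MeasurableSet R)
    (hato : IsAlmostTotalOrder R) :
    ∀ t ∈ Set.Icc (0:ℝ) 1,
      volume {u : ℝ | u ∈ Set.Icc (0:ℝ) 1 ∧ ordf R u = t} = 0 := by
  intro t _
  have hsection (u : ℝ) :
      volume.restrict I (lowerSection R u) = volume {v | v ∈ I ∧ (v, u) ∈ R} := by
    rw [Measure.restrict_apply' measurableSet_Icc, Set.inter_comm]
    rfl
  have hlevel := measure_setOf_measure_lowerSection_eq_eq_zero hR hato.ae_total hato.ae_antisymm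
    hato.ae_trans (ENNReal.ofReal t)
  rw [Measure.restrict_apply' measurableSet_Icc] at hlevel
  refine measure_mono_null ?_ hlevel
  rintro u ⟨huI, hu⟩
  refine ⟨?_, huI⟩
  rw [Set.mem_ofPred_eq, ← hu, ordf, ← hsection, ENNReal.ofReal_toReal (measure_ne_top _ _)]
end

section
/- Every almost total ordering ≺ of I (measurable as a subset of I²) is generated by a nonsingular measurable function: the function f(u) := Leb({v ∈ I : v ≺ u}) maps I to I, preserves Lebesgue measure, every level set of f has measure zero, and for almost every pair (u,v) ∈ I², u ≺ v if and only if f(u) < f(v). -/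
open MeasureTheory

/-!
For `u ≺ v`, transitivity, totality and antisymmetry make the lower section of `v` almost the
disjoint union of the lower section of `u` and the "interval" `{w | u ≺ w ≺ v}`, so
`f v = f u + μ {w | u ≺ w ≺ v}`. On a level set `E` of `f` all these intervals are therefore
null; for a generic `a ∈ E` the sets `{c ∈ E | a ≺ c}` and `{c ∈ E | c ≺ a}` then carry an a.e.
total relation of measure zero, which is only possible if they are null, so `E` is null.
Hence `u ≺ v ↔ f u < f v` almost everywhere, and the cdf of the law of `f` fixes almost every
point. An atomless law on `ℝ` whose cdf fixes almost every point is uniform on `[0, 1]`: the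
closed set of fixed points carries the law and the cdf is flat across its gaps.

Nothing in this uses the structure of `[0, 1]`: it works on any probability space.
-/

open ProbabilityTheory Set

section

variable {α : Type*} [MeasurableSpace α] {ν : Measure α}

theorem MeasureTheory.ae_restrict_iff_measure_setOf_and_not {s : Set α} {p : α → Prop}
    (hs : MeasurableSet s) : (∀ᵐ x ∂ν.restrict s, p x) ↔ ν {x | x ∈ s ∧ ¬p x} = 0 := by
  simp only [ae_restrict_iff' hs, ae_iff, Classical.not_imp]

theorem MeasureTheory.Measure.eq_zero_of_ae_ae_total_of_ae_ae_notMem [SFinite ν]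
    {S : Set (α × α)} (hS : MeasurableSet S)
    (htotal : ∀ᵐ x ∂ν, ∀ᵐ y ∂ν, (x, y) ∈ S ∨ (y, x) ∈ S)
    (hnot : ∀ᵐ x ∂ν, ∀ᵐ y ∂ν, (x, y) ∉ S) : ν = 0 := by
  have hnot' := (Measure.ae_ae_comm (p := fun x y => (x, y) ∉ S) hS.compl).1 hnot
  by_contra hν
  have := ae_neBot.2 hν
  obtain ⟨x, hxtot, hx, hx'⟩ := (htotal.and (hnot.and hnot')).exists
  obtain ⟨y, hy⟩ := (hxtot.and (hx.and hx')).exists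
  tauto

end

instance : IsProbabilityMeasure (volume.restrict (Icc (0 : ℝ) 1)) := ⟨by simp⟩

namespace ProbabilityTheory

variable {ν : Measure ℝ}

theorem continuous_cdf [IsProbabilityMeasure ν] [NullSingletonClass ν] :
    Continuous (cdf ν) := by
  refine continuous_iff_continuousAt.2 fun x =>
    (monotone_cdf ν).continuousAt_iff_leftLim_eq_rightLim.2 ?_
  have hjump := (cdf ν).measure_singleton x
  rw [measure_cdf, measure_singleton, eq_comm, ENNReal.ofReal_eq_zero, sub_nonpos] at hjump
  rw [(cdf ν).rightLim_eq]
  exact le_antisymm ((monotone_cdf ν).leftLim_le le_rfl) hjump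

theorem cdf_eq_of_measure_Ioo_eq_zero [IsProbabilityMeasure ν] [NullSingletonClass ν] {a b : ℝ}
    (hab : a ≤ b) (h : ν (Ioo a b) = 0) : cdf ν a = cdf ν b := by
  have hIoc := (cdf ν).measure_Ioc a b
  rw [measure_cdf, ← measure_congr Ioo_ae_eq_Ioc, h, eq_comm, ENNReal.ofReal_eq_zero,
    sub_nonpos] at hIoc
  exact le_antisymm (monotone_cdf ν hab) hIoc

theorem cdf_volume_restrict_Icc_zero_one (x : ℝ) :
    cdf (volume.restrict (Icc 0 1)) x = max (min x 1) 0 := by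
  have : Iic x ∩ Icc 0 1 = Icc 0 (min x 1) := by
    ext y; simp only [mem_inter_iff, mem_Iic, mem_Icc, le_min_iff]; tauto
  rw [cdf_eq_real, measureReal_restrict_apply measurableSet_Iic, this, Real.volume_real_Icc,
    sub_zero]

variable [IsProbabilityMeasure ν] [NullSingletonClass ν]

theorem cdf_le_max_zero_of_ae_cdf_eq_self (h : ∀ᵐ y ∂ν, cdf ν y = y) (s : ℝ) :
    cdf ν s ≤ max s 0 := by
  set T := {y | cdf ν y = y}
  have hT : ν Tᶜ = 0 := h
  rcases (Iic s ∩ T).eq_empty_or_nonempty with hempty | hne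
  · have : ν (Iic s) = 0 := measure_mono_null (fun y hy hyT => hempty.subset ⟨hy, hyT⟩) hT
    rw [cdf_eq_real, measureReal_def, this]
    exact le_max_right _ _
  · have hc := (isClosed_Iic.inter (isClosed_eq continuous_cdf continuous_id)).csSup_mem hne
      ⟨s, fun _ hy => hy.1⟩
    set c := sSup (Iic s ∩ T)
    have hgap : ν (Ioo c s) = 0 := measure_mono_null
      (fun y hy hyT => hy.1.not_ge (le_csSup ⟨s, fun _ hy => hy.1⟩ ⟨hy.2.le, hyT⟩)) hT
    rw [← cdf_eq_of_measure_Ioo_eq_zero hc.1 hgap, hc.2]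
    exact hc.1.trans (le_max_left _ _)

theorem min_one_le_cdf_of_ae_cdf_eq_self (h : ∀ᵐ y ∂ν, cdf ν y = y) (s : ℝ) :
    min s 1 ≤ cdf ν s := by
  set T := {y | cdf ν y = y}
  have hT : ν Tᶜ = 0 := h
  rcases (Ici s ∩ T).eq_empty_or_nonempty with hempty | hne
  · have : ν (Iic s)ᶜ = 0 := measure_mono_null
      (fun y (hy : ¬y ≤ s) hyT => hempty.subset ⟨(not_le.1 hy).le, hyT⟩ : (Iic s)ᶜ ⊆ Tᶜ) hT
    rw [cdf_eq_real, measureReal_def, (prob_compl_eq_zero_iff measurableSet_Iic).1 this]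
    exact min_le_right _ _
  · have hc := (isClosed_Ici.inter (isClosed_eq continuous_cdf continuous_id)).csInf_mem hne
      ⟨s, fun _ hy => hy.1⟩
    set c := sInf (Ici s ∩ T)
    have hgap : ν (Ioo s c) = 0 := measure_mono_null
      (fun y hy hyT => hy.2.not_ge (csInf_le ⟨s, fun _ hy => hy.1⟩ ⟨hy.1.le, hyT⟩)) hT
    rw [cdf_eq_of_measure_Ioo_eq_zero hc.1 hgap, hc.2]
    exact (min_le_left _ _).trans hc.1

theorem eq_volume_restrict_Icc_of_ae_cdf_eq_self (h : ∀ᵐ y ∂ν, cdf ν y = y) :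
    ν = volume.restrict (Icc 0 1) := by
  refine Measure.eq_of_cdf _ _ (StieltjesFunction.ext fun x => ?_)
  have hle := cdf_le_max_zero_of_ae_cdf_eq_self h x
  have hge := min_one_le_cdf_of_ae_cdf_eq_self h x
  rw [cdf_volume_restrict_Icc_zero_one]
  have h0 := cdf_nonneg ν x
  have h1 := cdf_le_one ν x
  simp only [max_def, min_def] at hle hge ⊢
  split_ifs at hle hge ⊢ <;> linarith

end ProbabilityTheory

section AETotalOrder

variable {α : Type*} [MeasurableSpace α] {μ ν : Measure α} {R : Set (α × α)}

structure IsAETotalOrder (μ : Measure α) (R : Set (α × α)) : Prop where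
  total : ∀ᵐ p ∂μ.prod μ, p ∈ R ∨ p.swap ∈ R
  antisymm : ∀ᵐ p ∂μ.prod μ, ¬(p ∈ R ∧ p.swap ∈ R)
  trans :
    ∀ᵐ q ∂μ.prod (μ.prod μ), (q.1, q.2.1) ∈ R → (q.2.1, q.2.2) ∈ R → (q.1, q.2.2) ∈ R

def between (R : Set (α × α)) (u v : α) : Set α := {w | (u, w) ∈ R ∧ (w, v) ∈ R}

noncomputable def lowerMass (μ : Measure α) (R : Set (α × α)) (u : α) : ℝ :=
  μ.real {v | (v, u) ∈ R}

theorem measurableSet_between (hR : MeasurableSet R) (u v : α) :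
    MeasurableSet (between R u v) :=
  (measurable_prodMk_left hR).inter (measurable_prodMk_right hR)

theorem measurable_measure_between [SFinite ν] (hR : MeasurableSet R) :
    Measurable fun p : α × α => ν (between R p.1 p.2) :=
  measurable_measure_prodMk_left (s := {x : (α × α) × α | (x.1.1, x.2) ∈ R ∧ (x.2, x.1.2) ∈ R})
    (((measurable_fst.comp measurable_fst).prodMk measurable_snd) hR |>.inter
      ((measurable_snd.prodMk (measurable_snd.comp measurable_fst)) hR))

theorem measurable_lowerMass [SFinite μ] (hR : MeasurableSet R) : Measurable (lowerMass μ R) :=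
  (measurable_measure_prodMk_right hR).ennreal_toReal

theorem measurableSet_mem_iff_lowerMass_lt [SFinite μ] (hR : MeasurableSet R) :
    MeasurableSet {p : α × α | p ∈ R ↔ lowerMass μ R p.1 < lowerMass μ R p.2} :=
  measurableSet_setOfPred.2 ((measurableSet_setOfPred.1 hR).iff (measurableSet_setOfPred.1
    (measurableSet_lt ((measurable_lowerMass hR).comp measurable_fst)
      ((measurable_lowerMass hR).comp measurable_snd))))

theorem lowerMass_mem_Icc [IsProbabilityMeasure μ] (u : α) : lowerMass μ R u ∈ Icc 0 1 :=
  ⟨measureReal_nonneg, measureReal_le_one⟩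

theorem measure_upper_eq_zero_of_ae_measure_between [SFinite ν] (hR : MeasurableSet R)
    (htotal : ∀ᵐ x ∂ν, ∀ᵐ y ∂ν, (x, y) ∈ R ∨ (y, x) ∈ R) {a : α}
    (ha : ∀ᵐ c ∂ν, (a, c) ∈ R → ν (between R a c) = 0) : ν {c | (a, c) ∈ R} = 0 := by
  set U := {c | (a, c) ∈ R}
  have hU : MeasurableSet U := measurable_prodMk_left hR
  rw [← Measure.restrict_eq_zero]
  refine Measure.eq_zero_of_ae_ae_total_of_ae_ae_notMem (S := Prod.swap ⁻¹' R)
    (measurable_swap hR) ?_ ?_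
  · exact ae_restrict_of_ae
      (htotal.mono fun _ hx => ae_restrict_of_ae (hx.mono fun _ => Or.symm))
  · filter_upwards [ae_restrict_mem hU, ae_restrict_of_ae ha] with c hcU hc
    filter_upwards [ae_restrict_mem hU,
      ae_restrict_of_ae (measure_eq_zero_iff_ae_notMem.1 (hc hcU))] with b hbU hb hbc
    exact hb ⟨hbU, hbc⟩

theorem measure_lower_eq_zero_of_ae_measure_between [SFinite ν] (hR : MeasurableSet R)
    (htotal : ∀ᵐ x ∂ν, ∀ᵐ y ∂ν, (x, y) ∈ R ∨ (y, x) ∈ R) {a : α}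
    (ha : ∀ᵐ c ∂ν, (c, a) ∈ R → ν (between R c a) = 0) : ν {c | (c, a) ∈ R} = 0 := by
  have hswap : ∀ c, between (Prod.swap ⁻¹' R) a c = between R c a := fun c => by
    ext; simp only [between, mem_preimage, Prod.swap_prod_mk, mem_ofPred_eq, and_comm]
  refine measure_upper_eq_zero_of_ae_measure_between (R := Prod.swap ⁻¹' R)
    (measurable_swap hR) (htotal.mono fun _ hx => hx.mono fun _ => Or.symm) ?_
  simpa only [hswap, mem_preimage, Prod.swap_prod_mk] using ha

namespace IsAETotalOrder

section SFinite

variable [SFinite μ] (h : IsAETotalOrder μ R)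
include h

theorem ae_ae_total : ∀ᵐ u ∂μ, ∀ᵐ v ∂μ, (u, v) ∈ R ∨ (v, u) ∈ R :=
  Measure.ae_ae_of_ae_prod h.total

theorem ae_ae_antisymm : ∀ᵐ u ∂μ, ∀ᵐ v ∂μ, ¬((u, v) ∈ R ∧ (v, u) ∈ R) :=
  Measure.ae_ae_of_ae_prod h.antisymm

theorem ae_ae_ae_trans_lower :
    ∀ᵐ u ∂μ, ∀ᵐ v ∂μ, ∀ᵐ w ∂μ, (w, u) ∈ R → (u, v) ∈ R → (w, v) ∈ R :=
  Measure.ae_ae_of_ae_prod <| Measure.ae_ae_of_ae_prod <|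
    Measure.measurePreserving_swap.quasiMeasurePreserving.ae h.trans

theorem ae_ae_ae_trans_between :
    ∀ᵐ u ∂μ, ∀ᵐ v ∂μ, ∀ᵐ w ∂μ, (u, w) ∈ R → (w, v) ∈ R → (u, v) ∈ R := by
  filter_upwards [Measure.ae_ae_of_ae_prod h.trans] with u hu
  exact Measure.ae_ae_of_ae_prod (Measure.measurePreserving_swap.quasiMeasurePreserving.ae hu)

end SFinite

section IsFiniteMeasure

variable [IsFiniteMeasure μ] (h : IsAETotalOrder μ R) (hR : MeasurableSet R)
include h hR

theorem ae_ae_lowerMass_eq_add :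
    ∀ᵐ u ∂μ, ∀ᵐ v ∂μ, (u, v) ∈ R →
      lowerMass μ R v = lowerMass μ R u + μ.real (between R u v) := by
  filter_upwards [h.ae_ae_ae_trans_lower, h.ae_ae_total, h.ae_ae_antisymm]
    with u htrans htotal hanti
  filter_upwards [htrans] with v htrans' huv
  have hunion :
      ({w | (w, v) ∈ R} : Set α) =ᵐ[μ] ({w | (w, u) ∈ R} ∪ between R u v : Set α) := by
    refine Filter.eventuallyEq_set.2 ?_
    filter_upwards [htrans', htotal, hanti] with w hwuv huw hw
    exact ⟨fun hwv => huw.symm.imp id fun huw => ⟨huw, hwv⟩,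
      fun hw' => hw'.elim (hwuv · huv) And.right⟩
  have hdisj : AEDisjoint μ {w | (w, u) ∈ R} (between R u v) := by
    refine measure_eq_zero_iff_ae_notMem.2 ?_
    filter_upwards [hanti] with w hw hw'
    exact hw ⟨hw'.2.1, hw'.1⟩
  rw [lowerMass, measureReal_congr hunion,
    measureReal_union₀ (measurableSet_between hR u v).nullMeasurableSet hdisj]
  rfl

theorem ae_ae_lowerMass_le :
    ∀ᵐ u ∂μ, ∀ᵐ v ∂μ, (u, v) ∈ R → lowerMass μ R u ≤ lowerMass μ R v := by
  filter_upwards [h.ae_ae_lowerMass_eq_add hR] with u hu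
  filter_upwards [hu] with v hv huv
  rw [hv huv]
  exact le_add_of_nonneg_right measureReal_nonneg

theorem ae_ae_measure_between_eq_zero :
    ∀ᵐ u ∂μ, ∀ᵐ v ∂μ, lowerMass μ R u = lowerMass μ R v → μ (between R u v) = 0 := by
  filter_upwards [h.ae_ae_lowerMass_eq_add hR, h.ae_ae_ae_trans_between] with u hgap htrans
  filter_upwards [hgap, htrans] with v hgap' htrans' heq
  by_cases huv : (u, v) ∈ R
  · rw [← measureReal_eq_zero_iff]
    linarith [hgap' huv]
  · exact measure_eq_zero_iff_ae_notMem.2 (htrans'.mono fun w hw hw' => huv (hw hw'.1 hw'.2))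

theorem measure_lowerMass_preimage_singleton (t : ℝ) : μ (lowerMass μ R ⁻¹' {t}) = 0 := by
  set E := lowerMass μ R ⁻¹' {t}
  have hE : MeasurableSet E := measurable_lowerMass hR (measurableSet_singleton t)
  set κ := μ.restrict E
  have hκ_between : ∀ᵐ a ∂κ, ∀ᵐ c ∂κ, κ (between R a c) = 0 := by
    filter_upwards [ae_restrict_mem hE, ae_restrict_of_ae (h.ae_ae_measure_between_eq_zero hR)]
      with a haE ha
    filter_upwards [ae_restrict_mem hE, ae_restrict_of_ae ha] with c hcE hc
    exact nonpos_iff_eq_zero.1 ((Measure.restrict_apply_le _ _).trans_eq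
      (hc ((haE : lowerMass μ R a = t).trans hcE.symm)))
  have hκ_between' : ∀ᵐ a ∂κ, ∀ᵐ c ∂κ, κ (between R c a) = 0 :=
    (Measure.ae_ae_comm (p := fun a c => κ (between R a c) = 0)
      (measurable_measure_between hR (measurableSet_singleton 0))).1 hκ_between
  have hκ_total : ∀ᵐ a ∂κ, ∀ᵐ c ∂κ, (a, c) ∈ R ∨ (c, a) ∈ R :=
    ae_restrict_of_ae (h.ae_ae_total.mono fun _ ha => ae_restrict_of_ae ha)
  rw [← Measure.restrict_eq_zero]
  by_contra hκ
  have := ae_neBot.2 hκ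
  obtain ⟨a, ha, ha', ha_total⟩ := (hκ_between.and (hκ_between'.and hκ_total)).exists
  have hupper := measure_upper_eq_zero_of_ae_measure_between hR hκ_total
    (ha.mono fun _ hc _ => hc)
  have hlower := measure_lower_eq_zero_of_ae_measure_between hR hκ_total
    (ha'.mono fun _ hc _ => hc)
  refine hκ (Measure.measure_univ_eq_zero.1
    (measure_mono_null_ae ?_ (measure_union_null hupper hlower)))
  filter_upwards [ha_total] with c hc _
  exact hc

theorem ae_ae_mem_iff_lowerMass_lt :
    ∀ᵐ u ∂μ, ∀ᵐ v ∂μ, (u, v) ∈ R ↔ lowerMass μ R u < lowerMass μ R v := by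
  have hf := measurable_lowerMass (μ := μ) hR
  have hle' : ∀ᵐ u ∂μ, ∀ᵐ v ∂μ, (v, u) ∈ R → lowerMass μ R v ≤ lowerMass μ R u :=
    (Measure.ae_ae_comm (p := fun v u => (v, u) ∈ R → lowerMass μ R v ≤ lowerMass μ R u)
      (measurableSet_setOfPred.2 ((measurableSet_setOfPred.1 hR).imp
        (measurableSet_setOfPred.1 (measurableSet_le (hf.comp measurable_fst)
          (hf.comp measurable_snd)))))).1
      (h.ae_ae_lowerMass_le hR)
  have hne : ∀ u, ∀ᵐ v ∂μ, lowerMass μ R v ≠ lowerMass μ R u := fun u =>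
    measure_eq_zero_iff_ae_notMem.1 (h.measure_lowerMass_preimage_singleton hR _)
  filter_upwards [h.ae_ae_lowerMass_le hR, hle', h.ae_ae_total] with u hle hle' htotal
  filter_upwards [hle, hle', htotal, hne u] with v hle hle' htotal hne
  refine ⟨fun huv => (hle huv).lt_of_ne hne.symm, fun hlt => htotal.resolve_right fun hvu => ?_⟩
  exact (hle' hvu).not_gt hlt

theorem ae_measureReal_lowerMass_le :
    ∀ᵐ u ∂μ, μ.real {w | lowerMass μ R w ≤ lowerMass μ R u} = lowerMass μ R u := by
  have hswap : ∀ᵐ u ∂μ, ∀ᵐ w ∂μ, (w, u) ∈ R ↔ lowerMass μ R w < lowerMass μ R u :=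
    (Measure.ae_ae_comm (p := fun w u => (w, u) ∈ R ↔ lowerMass μ R w < lowerMass μ R u)
      (measurableSet_mem_iff_lowerMass_lt hR)).1 (h.ae_ae_mem_iff_lowerMass_lt hR)
  filter_upwards [hswap] with u hu
  refine measureReal_congr (Filter.eventuallyEq_set.2 ?_)
  filter_upwards [hu, measure_eq_zero_iff_ae_notMem.1
    (h.measure_lowerMass_preimage_singleton hR (lowerMass μ R u))] with w hw hne
  exact le_iff_lt_or_eq.trans ((or_iff_left hne).trans hw.symm)

end IsFiniteMeasure

theorem map_lowerMass [IsProbabilityMeasure μ] (h : IsAETotalOrder μ R) (hR : MeasurableSet R) :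
    μ.map (lowerMass μ R) = volume.restrict (Icc 0 1) := by
  have hf := measurable_lowerMass (μ := μ) hR
  have := Measure.isProbabilityMeasure_map (μ := μ) hf.aemeasurable
  have : NullSingletonClass (μ.map (lowerMass μ R)) := ⟨fun t => by
    rw [Measure.map_apply hf (measurableSet_singleton t)]
    exact h.measure_lowerMass_preimage_singleton hR t⟩
  refine eq_volume_restrict_Icc_of_ae_cdf_eq_self <|
    (ae_map_iff hf.aemeasurable
      (measurableSet_eq_fun (monotone_cdf _).measurable measurable_id)).2 ?_
  filter_upwards [h.ae_measureReal_lowerMass_le hR] with u hu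
  rwa [cdf_eq_real, map_measureReal_apply hf measurableSet_Iic]

end IsAETotalOrder

end AETotalOrder

section UnitInterval

variable {R : Set (ℝ × ℝ)}

theorem IsAlmostTotalOrder.isAETotalOrder (h : IsAlmostTotalOrder R) :
    IsAETotalOrder (volume.restrict (Icc 0 1)) R := by
  obtain ⟨htotal, hantisymm, htrans⟩ := h
  refine ⟨?_, ?_, ?_⟩
  · rw [Measure.prod_restrict, ← Measure.volume_eq_prod,
      ae_restrict_iff_measure_setOf_and_not (measurableSet_Icc.prod measurableSet_Icc)]
    refine measure_mono_null ?_ htotal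
    rintro p ⟨⟨hp1, hp2⟩, hp⟩
    exact ⟨hp1, hp2, not_or.1 hp⟩
  · rw [Measure.prod_restrict, ← Measure.volume_eq_prod,
      ae_restrict_iff_measure_setOf_and_not (measurableSet_Icc.prod measurableSet_Icc)]
    refine measure_mono_null ?_ hantisymm
    rintro p ⟨⟨hp1, hp2⟩, hp⟩
    exact ⟨hp1, hp2, not_not.1 hp⟩
  · rw [Measure.prod_restrict, Measure.prod_restrict, ← Measure.volume_eq_prod,
      ← Measure.volume_eq_prod, ae_restrict_iff_measure_setOf_and_not
        (measurableSet_Icc.prod (measurableSet_Icc.prod measurableSet_Icc))]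
    refine measure_mono_null ?_ htrans
    rintro q ⟨⟨hq1, hq2, hq3⟩, hq⟩
    exact ⟨hq1, hq2, hq3, by tauto⟩

theorem ordf_eq_lowerMass (hR : MeasurableSet R) :
    ordf R = lowerMass (volume.restrict (Icc 0 1)) R := by
  funext u
  have hsection : MeasurableSet {v : ℝ | (v, u) ∈ R} := measurable_prodMk_right hR
  rw [ordf, lowerMass, measureReal_restrict_apply hsection, measureReal_def, inter_comm]
  rfl

end UnitInterval

/-- Every measurable almost total ordering `≺` of `I` is generated by a nonsingular
measurable function: `f(u) := Leb({v ∈ I : v ≺ u})` is measurable, maps `I` to `I`,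
preserves Lebesgue measure on `I`, has null level sets, and for almost every pair
`(u,v) ∈ I²`, `u ≺ v` iff `f(u) < f(v)`. -/
theorem almost_total_order_generated_by_function (R : Set (ℝ × ℝ))
    (hR : MeasurableSet R) (hato : IsAlmostTotalOrder R) :
    Measurable (ordf R) ∧
    (∀ u ∈ Set.Icc (0:ℝ) 1, ordf R u ∈ Set.Icc (0:ℝ) 1) ∧
    Measure.map (ordf R) (volume.restrict (Set.Icc (0:ℝ) 1))
      = volume.restrict (Set.Icc (0:ℝ) 1) ∧
    (∀ t : ℝ, volume {u : ℝ | u ∈ Set.Icc (0:ℝ) 1 ∧ ordf R u = t} = 0) ∧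
    volume {p : ℝ × ℝ | p.1 ∈ Set.Icc (0:ℝ) 1 ∧ p.2 ∈ Set.Icc (0:ℝ) 1 ∧
      ¬((p ∈ R) ↔ ordf R p.1 < ordf R p.2)} = 0 := by
  have h := hato.isAETotalOrder
  rw [ordf_eq_lowerMass hR]
  refine ⟨measurable_lowerMass hR, fun u _ => lowerMass_mem_Icc u, h.map_lowerMass hR,
    fun t => ?_, ?_⟩
  · have hlevel := h.measure_lowerMass_preimage_singleton hR t
    rwa [Measure.restrict_apply (measurable_lowerMass hR (measurableSet_singleton t)),
      inter_comm] at hlevel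
  · have horder := (Measure.ae_prod_iff_ae_ae (measurableSet_mem_iff_lowerMass_lt hR)).2
      (h.ae_ae_mem_iff_lowerMass_lt hR)
    rw [Measure.prod_restrict, ← Measure.volume_eq_prod,
      ae_restrict_iff_measure_setOf_and_not (measurableSet_Icc.prod measurableSet_Icc)] at horder
    refine measure_mono_null ?_ horder
    rintro p ⟨hp1, hp2, hp⟩
    exact ⟨⟨hp1, hp2⟩, hp⟩
end

section
/- Let ≺ be an almost total ordering of I (measurable as a subset of I²) and let f(u) := Leb({v ∈ I : v ≺ u}). If h : I → [0,1] is a Lebesgue-measure-preserving measurable function such that for almost every (u,v) ∈ I², u ≺ v if and only if h(u) < h(v), then h = f almost everywhere. In other words, among all Lebesgue-measure-preserving functions from I to I generating the ordering ≺, f is the unique one (up to null sets). -/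
open MeasureTheory

/-- Uniqueness: if `h : I → [0,1]` is a Lebesgue-measure-preserving measurable function
generating the almost total ordering `≺` (i.e. for a.e. `(u,v) ∈ I²`,
`u ≺ v ⟺ h(u) < h(v)`), then `h` coincides almost everywhere on `I` with
`f(u) := Leb({v ∈ I : v ≺ u})`. -/
theorem measure_preserving_generator_unique (R : Set (ℝ × ℝ))
    (hR : MeasurableSet R) (hato : IsAlmostTotalOrder R)
    (h : ℝ → ℝ) (hmeas : Measurable h)
    (hrange : ∀ u ∈ Set.Icc (0:ℝ) 1, h u ∈ Set.Icc (0:ℝ) 1)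
    (hpres : Measure.map h (volume.restrict (Set.Icc (0:ℝ) 1))
      = volume.restrict (Set.Icc (0:ℝ) 1))
    (hgen : volume {p : ℝ × ℝ | p.1 ∈ Set.Icc (0:ℝ) 1 ∧ p.2 ∈ Set.Icc (0:ℝ) 1 ∧
      ¬((p ∈ R) ↔ h p.1 < h p.2)} = 0) :
    ∀ᵐ u ∂(volume.restrict (Set.Icc (0:ℝ) 1)), h u = ordf R u := by
  set I : Set ℝ := Set.Icc (0:ℝ) 1 with hI
  set S : Set (ℝ × ℝ) := {p : ℝ × ℝ | p.1 ∈ I ∧ p.2 ∈ I ∧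
      ¬((p ∈ R) ↔ h p.1 < h p.2)} with hS
  have hSmeas : MeasurableSet S := by
    apply MeasurableSet.inter (measurable_fst measurableSet_Icc)
    apply MeasurableSet.inter (measurable_snd measurableSet_Icc)
    have h1 : MeasurableSet {p : ℝ × ℝ | h p.1 < h p.2} :=
      measurableSet_lt (hmeas.comp measurable_fst) (hmeas.comp measurable_snd)
    show MeasurableSet {p : ℝ × ℝ | ¬((p ∈ R) ↔ h p.1 < h p.2)}
    have : {p : ℝ × ℝ | ¬((p ∈ R) ↔ h p.1 < h p.2)} =
        (R \ {p : ℝ × ℝ | h p.1 < h p.2}) ∪ ({p : ℝ × ℝ | h p.1 < h p.2} \ R) := by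
      ext p; by_cases hp : p ∈ R <;> by_cases hq : h p.1 < h p.2 <;> simp [hp, hq]
    rw [this]
    exact ((hR.diff h1).union (h1.diff hR))
  -- swap
  have hswap : volume (Prod.swap ⁻¹' S) = 0 := by
    rw [Measure.volume_eq_prod ℝ ℝ,
      Measure.measurePreserving_swap.measure_preimage hSmeas.nullMeasurableSet,
      ← Measure.volume_eq_prod ℝ ℝ]
    exact hgen
  have hsec : ∀ᵐ u : ℝ, volume (Prod.mk u ⁻¹' (Prod.swap ⁻¹' S)) = 0 := by
    rw [Measure.volume_eq_prod ℝ ℝ] at hswap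
    exact (Measure.measure_prod_null (measurable_swap hSmeas)).mp hswap
  have hsec' : ∀ᵐ u ∂(volume.restrict I), volume (Prod.mk u ⁻¹' (Prod.swap ⁻¹' S)) = 0 :=
    ae_restrict_of_ae hsec
  have hmem : ∀ᵐ u ∂(volume.restrict I), u ∈ I := ae_restrict_mem measurableSet_Icc
  filter_upwards [hsec', hmem] with u hu huI
  -- the section set
  have hsecset : Prod.mk u ⁻¹' (Prod.swap ⁻¹' S) =
      {v : ℝ | v ∈ I ∧ u ∈ I ∧ ¬(((v, u) ∈ R) ↔ h v < h u)} := by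
    ext v; simp [S, Prod.swap]
  rw [hsecset] at hu
  have hAB : {v : ℝ | v ∈ I ∧ (v, u) ∈ R} =ᵐ[volume] {v : ℝ | v ∈ I ∧ h v < h u} := by
    rw [Filter.eventuallyEq_set, ae_iff]
    apply measure_mono_null _ hu
    intro v hv
    simp only [Set.mem_setOf_eq] at hv ⊢
    by_cases hvI : v ∈ I
    · refine ⟨hvI, huI, fun hiff => hv (by simp [hvI, hiff])⟩
    · exact absurd (by simp [hvI]) hv
  have hvolAB : volume {v : ℝ | v ∈ I ∧ (v, u) ∈ R} = volume {v : ℝ | v ∈ I ∧ h v < h u} :=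
    measure_congr hAB
  have hB : volume {v : ℝ | v ∈ I ∧ h v < h u} = ENNReal.ofReal (h u) := by
    have hBset : {v : ℝ | v ∈ I ∧ h v < h u} = I ∩ h ⁻¹' Set.Iio (h u) := by
      ext v; simp [Set.mem_Iio, and_comm]
    rw [hBset, Set.inter_comm, ← Measure.restrict_apply (hmeas measurableSet_Iio),
      ← Measure.map_apply hmeas measurableSet_Iio, hpres,
      Measure.restrict_apply measurableSet_Iio]
    have hu01 := hrange u huI
    have : Set.Iio (h u) ∩ I = Set.Ico 0 (h u) := by
      ext x
      simp only [Set.mem_inter_iff, Set.mem_Iio, Set.mem_Ico, hI, Set.mem_Icc]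
      constructor
      · rintro ⟨hx, hx0, _⟩; exact ⟨hx0, hx⟩
      · rintro ⟨hx0, hx⟩; exact ⟨hx, hx0, le_trans hx.le hu01.2⟩
    rw [this, Real.volume_Ico, sub_zero]
  unfold ordf
  rw [show {v : ℝ | v ∈ Set.Icc (0:ℝ) 1 ∧ (v, u) ∈ R} = {v : ℝ | v ∈ I ∧ (v, u) ∈ R} from rfl,
    hvolAB, hB, ENNReal.toReal_ofReal (hrange u huI).1]
end

section
/- Suppose Y = (Y_1,...,Y_n) is a binary rearrangement of the i.u.d. sequence X, with n ≥ 3, such that for some k ∈ {3,...,n} the initial rank R_k is independent of the random vector (Y_1,...,Y_{k-1}). Then R_k almost surely takes only its extreme values 1 and k: P(1 < R_k < k) = 0. -/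
open MeasureTheory

/-!
Fix a short interval `J` of length `1/N` and let `C_J` be the event that `Y_1, …, Y_{k-1}` all
lie in `J`. Since `Y` lists the coordinates of `X` in increasing order of their `f`-values,
`C_J` contains the event that `X_1, …, X_{k-1}` lie in `J ∩ {f ≤ 1/2}` and all other
coordinates in `{f > 1/2}`; choosing `J` by pigeonhole, `P(C_J) ≥ c N^{-(k-1)}` with `c > 0`
independent of `N`. On `{1 < R_k < k}`, `Y_k` lies between two of `Y_1, …, Y_{k-1}`, so on
`{1 < R_k < k} ∩ C_J` some `k` distinct coordinates of `X` lie in `J`, which has probability at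
most `C(n, k) N^{-k}`. Independence of `R_k` and `C_J` then gives `P(1 < R_k < k) = O(1/N)`.
-/

open ProbabilityTheory Finset
open scoped ENNReal

theorem Icc_subset_biUnion_Icc_div {N : ℕ} (hN : 0 < N) :
    Set.Icc (0:ℝ) 1 ⊆ ⋃ i ∈ range N, Set.Icc ((i:ℝ) / N) ((i + 1) / N) := by
  intro x hx
  have hN' : (0:ℝ) < N := by exact_mod_cast hN
  have hxN : 0 ≤ x * N := mul_nonneg hx.1 hN'.le
  set i := min ⌊x * N⌋₊ (N - 1)
  refine Set.mem_biUnion (mem_range.2 (by omega : i < N)) ⟨?_, ?_⟩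
  · rw [div_le_iff₀ hN']
    calc (i:ℝ) ≤ ⌊x * N⌋₊ := by exact_mod_cast min_le_left _ _
      _ ≤ x * N := Nat.floor_le hxN
  · rw [le_div_iff₀ hN']
    rcases le_total ⌊x * N⌋₊ (N - 1) with h | h
    · rw [show i = ⌊x * N⌋₊ from min_eq_left h]
      exact (Nat.lt_floor_add_one _).le
    · rw [show i = N - 1 from min_eq_right h, Nat.cast_sub hN, Nat.cast_one, sub_add_cancel]
      nlinarith [hx.2]

theorem exists_measure_div_card_le_measure_inter {α ι : Type*} [MeasurableSpace α]
    {ν : Measure α} {I : Finset ι} (hI : I.Nonempty) {J : ι → Set α}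
    (hcover : ∀ᵐ x ∂ν, x ∈ ⋃ i ∈ I, J i) (s : Set α) :
    ∃ i ∈ I, ν s / #I ≤ ν (s ∩ J i) := by
  refine ENNReal.exists_le_of_sum_le hI ?_
  rw [sum_const, nsmul_eq_mul, ENNReal.mul_div_cancel (by simpa using hI.ne_empty) (by simp)]
  calc ν s ≤ ν (⋃ i ∈ I, s ∩ J i) := measure_mono_ae <| by
        filter_upwards [hcover] with x hx hxs
        rw [← Set.inter_iUnion₂]
        exact ⟨hxs, hx⟩
    _ ≤ ∑ i ∈ I, ν (s ∩ J i) := measure_biUnion_finset_le _ _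

theorem exists_interval_measure_le_inv_nat_and_le_measure_inter (s : Set ℝ) {N : ℕ}
    (hN : 0 < N) :
    ∃ J : Set ℝ, MeasurableSet J ∧ J.OrdConnected ∧
      volume.restrict (Set.Icc (0:ℝ) 1) s * (N : ℝ≥0∞)⁻¹
        ≤ volume.restrict (Set.Icc (0:ℝ) 1) (s ∩ J) ∧
      volume.restrict (Set.Icc (0:ℝ) 1) J ≤ (N : ℝ≥0∞)⁻¹ := by
  obtain ⟨i, -, hi⟩ := exists_measure_div_card_le_measure_inter (nonempty_range_iff.2 hN.ne')
    (ae_restrict_of_forall_mem measurableSet_Icc (Icc_subset_biUnion_Icc_div hN)) s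
  refine ⟨Set.Icc (i / N) ((i + 1) / N), measurableSet_Icc, Set.ordConnected_Icc,
    by simpa [div_eq_mul_inv] using hi, ?_⟩
  refine (Measure.restrict_le_self _).trans_eq ?_
  rw [Real.volume_Icc, ← sub_div, add_sub_cancel_left, one_div,
    ENNReal.ofReal_inv_of_pos (by exact_mod_cast hN), ENNReal.ofReal_natCast]

theorem volume_restrict_Icc_zero_one_ne_zero {a b : ℝ} {t : Set ℝ} (ha : 0 ≤ a) (hab : a < b)
    (hb : b ≤ 1) (hsub : Set.Ioo a b ⊆ t) : volume.restrict (Set.Icc (0:ℝ) 1) t ≠ 0 := by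
  rw [Measure.restrict_apply' measurableSet_Icc]
  have hIoo : Set.Ioo a b ⊆ t ∩ Set.Icc 0 1 := fun x hx =>
    ⟨hsub hx, ha.trans hx.1.le, hx.2.le.trans hb⟩
  refine ((measure_mono hIoo).trans_lt' ?_).ne'
  simpa using hab

theorem Equiv.Perm.lt_of_strictMono_comp {n : ℕ} {α : Type*} [Preorder α]
    (σ : Equiv.Perm (Fin n)) {h : Fin n → α} (hσ : StrictMono (h ∘ σ)) {k : Fin n}
    (hk : ∀ i j, i < k → k ≤ j → h i < h j) {l : Fin n} (hl : l < k) : σ l < k := by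
  by_contra! hkl
  have hsub : (Iio k).map σ.symm.toEmbedding ⊆ Iio l := by
    simp only [subset_iff, mem_map_equiv, mem_Iio, Equiv.symm_symm]
    intro j hj
    exact hσ.lt_iff_lt.mp (by simpa using hk _ _ hj hkl)
  have := card_le_card hsub
  simp only [card_map, Fin.card_Iio] at this
  omega

theorem exists_lt_of_one_lt_irank {n : ℕ} {y : Fin n → ℝ} {k : Fin n} (h : 1 < irank y k) :
    ∃ i < k, y k < y i := by
  have hpos : 0 < #(univ.filter fun i : Fin n => i < k ∧ y k < y i) := by
    unfold irank at h
    omega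
  obtain ⟨i, hi⟩ := card_pos.mp hpos
  exact ⟨i, by simpa using hi⟩

theorem exists_le_of_irank_lt {n : ℕ} {y : Fin n → ℝ} {k : Fin n} (h : irank y k < k + 1) :
    ∃ i < k, y i ≤ y k := by
  by_contra! H
  have hall : univ.filter (fun i : Fin n => i < k ∧ y k < y i) = Iio k := by
    ext i
    simpa using fun hi => H i hi
  rw [irank, hall, Fin.card_Iio] at h
  omega

theorem Set.OrdConnected.mem_of_one_lt_irank_of_irank_lt {n : ℕ} {y : Fin n → ℝ} {k : Fin n}
    {J : Set ℝ} (hJ : J.OrdConnected) (hy : ∀ i < k, y i ∈ J) (h₁ : 1 < irank y k)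
    (h₂ : irank y k < k + 1) : y k ∈ J := by
  obtain ⟨i, hi, hyi⟩ := exists_le_of_irank_lt h₂
  obtain ⟨j, hj, hyj⟩ := exists_lt_of_one_lt_irank h₁
  exact hJ.out (hy i hi) (hy j hj) ⟨hyi, hyj.le⟩

theorem ENNReal.eq_zero_of_forall_le_mul_inv_nat {x c : ℝ≥0∞} (hc : c ≠ ∞)
    (h : ∀ N : ℕ, 0 < N → x ≤ c * (N : ℝ≥0∞)⁻¹) : x = 0 := by
  have hlim := ENNReal.Tendsto.const_mul ENNReal.tendsto_inv_nat_nhds_zero (Or.inr hc)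
  rw [mul_zero] at hlim
  exact nonpos_iff_eq_zero.mp <| ge_of_tendsto hlim <|
    (Filter.eventually_gt_atTop 0).mono h

theorem measure_exists_card_forall_mem_le {Ω ι β : Type*} [MeasurableSpace Ω]
    [MeasurableSpace β] [Fintype ι] {P : Measure Ω} {X : Ω → ι → β}
    (hX : iIndepFun (fun i ω => X ω i) P) {J : Set β} (hJ : MeasurableSet J) {r : ℝ≥0∞}
    (hr : ∀ i, P {ω | X ω i ∈ J} ≤ r) (m : ℕ) :
    P {ω | ∃ T : Finset ι, #T = m ∧ ∀ i ∈ T, X ω i ∈ J}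
      ≤ (Fintype.card ι).choose m * r ^ m := by
  have hset : {ω | ∃ T : Finset ι, #T = m ∧ ∀ i ∈ T, X ω i ∈ J}
      = ⋃ T ∈ powersetCard m univ, ⋂ i ∈ T, (fun ω => X ω i) ⁻¹' J := by
    ext ω
    simp
  have hT : ∀ T ∈ powersetCard m (univ : Finset ι),
      P (⋂ i ∈ T, (fun ω => X ω i) ⁻¹' J) ≤ r ^ m := by
    intro T hT
    rw [hX.measure_inter_preimage_eq_mul T fun _ _ => hJ, ← (mem_powersetCard.mp hT).2,
      ← prod_const]
    exact prod_le_prod' fun i _ => hr i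
  calc _ ≤ ∑ T ∈ powersetCard m univ, P (⋂ i ∈ T, (fun ω => X ω i) ⁻¹' J) :=
        hset ▸ measure_biUnion_finset_le _ _
    _ ≤ _ := by
        grw [sum_le_sum hT, sum_const, card_powersetCard, card_univ, nsmul_eq_mul]

section Rearrangement

variable {Ω : Type*} [MeasurableSpace Ω] {P : Measure Ω} {n : ℕ} {X : Ω → Fin n → ℝ}
  {ν : Measure ℝ}

theorem pow_mul_pow_le_measure_forall_lt_mem (hXm : ∀ i, Measurable fun ω => X ω i)
    (hX : iIndepFun (fun i ω => X ω i) P) (hlaw : ∀ i, P.map (fun ω => X ω i) = ν)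
    {f : ℝ → ℝ} {σ : Ω → Equiv.Perm (Fin n)} {Y : Ω → Fin n → ℝ}
    (hY : ∀ ω l, Y ω l = X ω (σ ω l)) (hσ : ∀ᵐ ω ∂P, StrictMono fun l => f (Y ω l))
    {A B : Set ℝ} (hA : MeasurableSet A) (hB : MeasurableSet B)
    (hAB : ∀ x ∈ A, ∀ y ∈ B, f x < f y) (k : Fin n) :
    ν A ^ (k : ℕ) * ν B ^ (n - k) ≤ P {ω | ∀ l < k, Y ω l ∈ A} := by
  set t : Fin n → Set ℝ := fun l => if l < k then A else B
  have ht : ∀ l, MeasurableSet (t l) := fun l => by unfold t; split_ifs <;> assumption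
  have hE : P {ω | ∀ l, X ω l ∈ t l} = ν A ^ (k : ℕ) * ν B ^ (n - k) := by
    have hinter : {ω | ∀ l, X ω l ∈ t l} = ⋂ l ∈ univ, (fun ω => X ω l) ⁻¹' t l := by
      ext; simp
    rw [hinter, hX.measure_inter_preimage_eq_mul _ fun l _ => ht l]
    simp only [← Measure.map_apply (hXm _) (ht _), hlaw, t, apply_ite ν, prod_ite, prod_const,
      not_lt, filter_gt_eq_Iio, filter_le_eq_Ici, Fin.card_Iio, Fin.card_Ici]
  rw [← hE]
  refine measure_mono_ae ?_
  filter_upwards [hσ] with ω hω hωE l hl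
  have hlow : ∀ i < k, X ω i ∈ A := fun i hi => by simpa [t, hi] using hωE i
  have hhigh : ∀ j, k ≤ j → X ω j ∈ B := fun j hj => by simpa [t, hj.not_gt] using hωE j
  simp only [hY] at hω ⊢
  exact hlow _ <| (σ ω).lt_of_strictMono_comp (h := fun i => f (X ω i)) hω
    (fun i j hi hj => hAB _ (hlow i hi) _ (hhigh j hj)) hl

theorem measure_one_lt_irank_lt_mul_measure_le (hXm : ∀ i, Measurable fun ω => X ω i)
    (hX : iIndepFun (fun i ω => X ω i) P) (hlaw : ∀ i, P.map (fun ω => X ω i) = ν)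
    {σ : Ω → Equiv.Perm (Fin n)} {Y : Ω → Fin n → ℝ} (hY : ∀ ω l, Y ω l = X ω (σ ω l))
    {k : Fin n}
    (hind : IndepFun (fun ω => irank (Y ω) k) (fun ω (i : {i : Fin n // i < k}) => Y ω i.1) P)
    {J : Set ℝ} (hJm : MeasurableSet J) (hJ : J.OrdConnected) :
    P {ω | 1 < irank (Y ω) k ∧ irank (Y ω) k < k + 1} * P {ω | ∀ l < k, Y ω l ∈ J}
      ≤ n.choose (k + 1) * ν J ^ (k + 1 : ℕ) := by
  have hC : {ω | ∀ l < k, Y ω l ∈ J}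
      = (fun ω (i : {i : Fin n // i < k}) => Y ω i.1) ⁻¹' Set.univ.pi fun _ => J := by
    ext; simp
  have hlawJ : ∀ i, P {ω | X ω i ∈ J} = ν J := fun i => by
    rw [← hlaw i, Measure.map_apply (hXm i) hJm]; rfl
  change P ((fun ω => irank (Y ω) k) ⁻¹' {m | 1 < m ∧ m < k + 1}) * _ ≤ _
  rw [hC, ← hind.measure_inter_preimage_eq_mul _ _ .of_discrete (.univ_pi fun _ => hJm)]
  refine (measure_mono ?_).trans <|
    (measure_exists_card_forall_mem_le hX hJm (hlawJ · |>.le) _).trans_eq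
      (by rw [Fintype.card_fin])
  rintro ω ⟨⟨h₁, h₂⟩, hω⟩
  simp only [Set.mem_preimage, Set.mem_univ_pi, Subtype.forall] at hω
  refine ⟨(Iic k).map (σ ω).toEmbedding, by simp, ?_⟩
  simp only [forall_mem_map, mem_Iic, Equiv.coe_toEmbedding, ← hY]
  intro i hi
  rcases hi.lt_or_eq with hi | rfl
  · exact hω i hi
  · exact hJ.mem_of_one_lt_irank_of_irank_lt (fun l hl => hω l hl) h₁ h₂

theorem measure_one_lt_irank_lt_eq_zero (hXm : ∀ i, Measurable fun ω => X ω i)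
    (hX : iIndepFun (fun i ω => X ω i) P)
    (hlaw : ∀ i, P.map (fun ω => X ω i) = volume.restrict (Set.Icc (0:ℝ) 1))
    {f : ℝ → ℝ} (hf : Measurable f) {c : ℝ}
    (hlow : volume.restrict (Set.Icc (0:ℝ) 1) (f ⁻¹' Set.Iic c) ≠ 0)
    (hhigh : volume.restrict (Set.Icc (0:ℝ) 1) (f ⁻¹' Set.Ioi c) ≠ 0)
    {σ : Ω → Equiv.Perm (Fin n)} {Y : Ω → Fin n → ℝ} (hY : ∀ ω l, Y ω l = X ω (σ ω l))
    (hσ : ∀ᵐ ω ∂P, StrictMono fun l => f (Y ω l)) {k : Fin n}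
    (hind : IndepFun (fun ω => irank (Y ω) k) (fun ω (i : {i : Fin n // i < k}) => Y ω i.1) P) :
    P {ω | 1 < irank (Y ω) k ∧ irank (Y ω) k < k + 1} = 0 := by
  set ν := volume.restrict (Set.Icc (0:ℝ) 1)
  set q := P {ω | 1 < irank (Y ω) k ∧ irank (Y ω) k < k + 1}
  set a := ν (f ⁻¹' Set.Iic c)
  set b := ν (f ⁻¹' Set.Ioi c)
  suffices q * (a ^ (k : ℕ) * b ^ (n - k)) = 0 by simpa [hlow, hhigh] using this
  refine ENNReal.eq_zero_of_forall_le_mul_inv_nat (ENNReal.natCast_ne_top (n.choose (k + 1)))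
    fun N hN => ?_
  obtain ⟨J, hJm, hJ, hsJ, hνJ⟩ :=
    exists_interval_measure_le_inv_nat_and_le_measure_inter (f ⁻¹' Set.Iic c) hN
  have hC : (a * (N : ℝ≥0∞)⁻¹) ^ (k : ℕ) * b ^ (n - k) ≤ P {ω | ∀ l < k, Y ω l ∈ J} := calc
    _ ≤ ν (f ⁻¹' Set.Iic c ∩ J) ^ (k : ℕ) * b ^ (n - k) := by gcongr
    _ ≤ P {ω | ∀ l < k, Y ω l ∈ f ⁻¹' Set.Iic c ∩ J} :=
        pow_mul_pow_le_measure_forall_lt_mem hXm hX hlaw hY hσ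
          ((hf measurableSet_Iic).inter hJm) (hf measurableSet_Ioi)
          (fun x hx y hy => hx.1.trans_lt hy) k
    _ ≤ _ := measure_mono fun ω hω l hl => (hω l hl).2
  have hN0 : (N : ℝ≥0∞)⁻¹ ^ (k : ℕ) ≠ 0 :=
    pow_ne_zero _ (ENNReal.inv_ne_zero.2 (ENNReal.natCast_ne_top N))
  have hNtop : (N : ℝ≥0∞)⁻¹ ^ (k : ℕ) ≠ ∞ :=
    ENNReal.pow_ne_top (ENNReal.inv_ne_top.2 (Nat.cast_ne_zero.2 hN.ne'))
  rw [← ENNReal.mul_le_mul_iff_left hN0 hNtop]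
  calc q * (a ^ (k : ℕ) * b ^ (n - k)) * (N : ℝ≥0∞)⁻¹ ^ (k : ℕ)
      = q * ((a * (N : ℝ≥0∞)⁻¹) ^ (k : ℕ) * b ^ (n - k)) := by ring
    _ ≤ q * P {ω | ∀ l < k, Y ω l ∈ J} := by gcongr
    _ ≤ n.choose (k + 1) * ν J ^ (k + 1 : ℕ) :=
        measure_one_lt_irank_lt_mul_measure_le hXm hX hlaw hY hind hJm hJ
    _ ≤ n.choose (k + 1) * (N : ℝ≥0∞)⁻¹ ^ (k + 1 : ℕ) := by gcongr
    _ = _ := by ring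

end Rearrangement

theorem binary_rearrangement_rank_extreme_general {n : ℕ}
    {Ω : Type} [MeasurableSpace Ω] (P : Measure Ω)
    (X : Ω → Fin n → ℝ) (hX : IsIUD P X)
    (f : ℝ → ℝ) (hfmeas : Measurable f)
    (hfpres : Measure.map f (volume.restrict (Set.Icc (0:ℝ) 1))
      = volume.restrict (Set.Icc (0:ℝ) 1))
    (μ : Ω → Equiv.Perm (Fin n))
    (hμ : ∀ᵐ ω ∂P, ∀ i j : Fin n, i < j →
      f (descArr n (X ω) (μ ω i)) < f (descArr n (X ω) (μ ω j)))
    (Y : Ω → Fin n → ℝ) (hY : Y = fun ω i => descArr n (X ω) (μ ω i))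
    (k : Fin n)
    (hind : ProbabilityTheory.IndepFun
      (fun ω => irank (Y ω) k)
      (fun ω (i : {i : Fin n // i < k}) => Y ω i.1) P) :
    P {ω | 1 < irank (Y ω) k ∧ irank (Y ω) k < k.1 + 1} = 0 := by
  obtain ⟨hXm, hXind, hlaw⟩ := hX
  set ν := volume.restrict (Set.Icc (0:ℝ) 1)
  have hν_pre : ∀ t, MeasurableSet t → ν (f ⁻¹' t) = ν t := fun t ht => by
    rw [← Measure.map_apply hfmeas ht, hfpres]
  subst hY
  refine measure_one_lt_irank_lt_eq_zero hXm hXind hlaw hfmeas (c := 1 / 2) ?_ ?_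
    (σ := fun ω => (μ ω).trans (Fin.revPerm.trans (Tuple.sort (X ω)))) (fun _ _ => rfl) hμ hind
  · rw [hν_pre _ measurableSet_Iic]
    exact volume_restrict_Icc_zero_one_ne_zero (b := 1 / 2) le_rfl (by norm_num) (by norm_num)
      (Set.Ioo_subset_Iio_self.trans Set.Iio_subset_Iic_self)
  · rw [hν_pre _ measurableSet_Ioi]
    exact volume_restrict_Icc_zero_one_ne_zero (b := 1) (by norm_num) (by norm_num) le_rfl
      Set.Ioo_subset_Ioi_self

/-- Suppose `Y` is a binary rearrangement of the i.u.d. sequence `X` directed by `f`,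
with `n ≥ 3`, such that for some `k ∈ {3,...,n}` (0-indexed: `2 ≤ k`) the initial rank
`R_k` is independent of `(Y_1,...,Y_{k-1})`.  Then `R_k` almost surely takes only its
extreme values `1` and `k`: `P(1 < R_k < k) = 0`. -/
theorem binary_rearrangement_rank_extreme {n : ℕ} (hn : 3 ≤ n)
    {Ω : Type} [MeasurableSpace Ω] (P : Measure Ω) [IsProbabilityMeasure P]
    (X : Ω → Fin n → ℝ) (hX : IsIUD P X)
    (f : ℝ → ℝ) (hfmeas : Measurable f)
    (hfrange : ∀ u ∈ Set.Icc (0:ℝ) 1, f u ∈ Set.Icc (0:ℝ) 1)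
    (hfpres : Measure.map f (volume.restrict (Set.Icc (0:ℝ) 1))
      = volume.restrict (Set.Icc (0:ℝ) 1))
    (hfns : ∀ t : ℝ, volume {u : ℝ | u ∈ Set.Icc (0:ℝ) 1 ∧ f u = t} = 0)
    (μ : Ω → Equiv.Perm (Fin n))
    (hμmeas : ∀ s : Equiv.Perm (Fin n), MeasurableSet {ω | μ ω = s})
    (hμ : ∀ᵐ ω ∂P, ∀ i j : Fin n, i < j →
      f (descArr n (X ω) (μ ω i)) < f (descArr n (X ω) (μ ω j)))
    (Y : Ω → Fin n → ℝ) (hY : Y = fun ω i => descArr n (X ω) (μ ω i))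
    (k : Fin n) (hk : 2 ≤ k.1)
    (hind : ProbabilityTheory.IndepFun
      (fun ω => irank (Y ω) k)
      (fun ω (i : {i : Fin n // i < k}) => Y ω i.1) P) :
    P {ω | 1 < irank (Y ω) k ∧ irank (Y ω) k < k.1 + 1} = 0 :=
  binary_rearrangement_rank_extreme_general P X hX f hfmeas hfpres μ hμ Y hY k hind
end
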